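/- arXiv:2603.05205 — 3 statements merged into one kernel-verified Lean document; each statement's English description precedes it below -/
import Mathlib

section
/- For any two plane spanning trees T_I and T_F of a finite point set P in convex position, there exists a shortest flip sequence from T_I to T_F in which every convex hull edge of P occurs as the removed edge of at most one flip of the sequence. -/
open scoped Classical

noncomputable section

/-- A point in the plane. -/
abbrev Point : Type := ℝ × ℝ

/-- An edge: an unordered pair of points. -/
abbrev Edge : Type := Sym2 Point

/-- The closed straight-line segment spanned by an edge. -/
def seg : Edge → Set Point :=
  Sym2.lift ⟨fun u v => segment ℝ u v, fun u v => segment_symm ℝ u v⟩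

/-- Two edges cross if they are distinct and their segments intersect in a point
that is not a common endpoint of the two edges. -/
def Crosses (e f : Edge) : Prop :=
  e ≠ f ∧ ∃ p : Point, p ∈ seg e ∧ p ∈ seg f ∧ ¬(p ∈ e ∧ p ∈ f)

/-- A finite point set is in convex position if no point lies in the convex hull
of the other points. -/
def ConvexPos (P : Finset Point) : Prop :=
  ∀ p ∈ P, p ∉ convexHull ℝ ((P : Set Point) \ {p})

/-- The cross product (signed area) determining on which side of the oriented
line through `p` and `q` the point `r` lies. -/
def crossProd (p q r : Point) : ℝ :=
  (q.1 - p.1) * (r.2 - p.2) - (q.2 - p.2) * (r.1 - p.1)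

/-- `e` is a convex hull edge of `P`: `e = uv` with `u, v ∈ P` distinct and all
other points of `P` strictly on one side of the line through `u` and `v`. -/
def IsHullEdge (P : Finset Point) (e : Edge) : Prop :=
  ∃ u v : Point, e = s(u, v) ∧ u ∈ P ∧ v ∈ P ∧ u ≠ v ∧
    ((∀ w ∈ P, w ≠ u → w ≠ v → 0 < crossProd u v w) ∨
     (∀ w ∈ P, w ≠ u → w ≠ v → crossProd u v w < 0))

/-- A diagonal of `P`: a nondegenerate edge between points of `P` that is not a
convex hull edge. -/
def IsDiagonal (P : Finset Point) (e : Edge) : Prop :=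
  (∀ p ∈ e, p ∈ P) ∧ ¬e.IsDiag ∧ ¬IsHullEdge P e

/-- `T` is a plane (non-crossing) spanning tree of `P`: the endpoints of the
edges lie in `P`, no edge is a loop, there are `|P| - 1` edges, any two points
of `P` are connected by edges of `T`, and the edges are pairwise non-crossing. -/
structure IsPST (P : Finset Point) (T : Finset Edge) : Prop where
  endpoints_mem : ∀ e ∈ T, ∀ p ∈ e, p ∈ P
  not_loop : ∀ e ∈ T, ¬e.IsDiag
  card_eq : T.card + 1 = P.card
  connected : ∀ u ∈ P, ∀ v ∈ P, Relation.ReflTransGen (fun a b => s(a, b) ∈ T) u v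
  noncrossing : ∀ e ∈ T, ∀ f ∈ T, ¬Crosses e f

/-- A flip from `T` to `T'` removing the edge `e` and adding the edge `f`. -/
def IsFlip (P : Finset Point) (T T' : Finset Edge) (e f : Edge) : Prop :=
  IsPST P T ∧ IsPST P T' ∧ e ∈ T ∧ f ∉ T ∧ T' = insert f (T.erase e)

/-- `S 0, S 1, …, S k` is a flip sequence of plane spanning trees of `P`. -/
def IsFlipSeq (P : Finset Point) (k : ℕ) (S : ℕ → Finset Edge) : Prop :=
  (∀ i ≤ k, IsPST P (S i)) ∧ ∀ i < k, ∃ e f : Edge, IsFlip P (S i) (S (i + 1)) e f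

/-- `S 0, …, S k` is a flip sequence from `TI` to `TF`. -/
def IsFlipSeqBtw (P : Finset Point) (TI TF : Finset Edge) (k : ℕ)
    (S : ℕ → Finset Edge) : Prop :=
  IsFlipSeq P k S ∧ S 0 = TI ∧ S k = TF

/-- The flip distance between two plane spanning trees of `P`. -/
def flipDist (P : Finset Point) (TI TF : Finset Edge) : ℕ :=
  sInf {k : ℕ | ∃ S : ℕ → Finset Edge, IsFlipSeqBtw P TI TF k S}

/-- `S 0, …, S k` is a shortest flip sequence from `TI` to `TF`. -/
def IsShortest (P : Finset Point) (TI TF : Finset Edge) (k : ℕ)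
    (S : ℕ → Finset Edge) : Prop :=
  IsFlipSeqBtw P TI TF k S ∧ k = flipDist P TI TF

/-- `Trace S k i e tr`: in the flip sequence `S i, S (i+1), …, S k`, the trace of
the edge `e` is the list `tr`. -/
inductive Trace (S : ℕ → Finset Edge) (k : ℕ) : ℕ → Edge → List Edge → Prop
  | last (e : Edge) : Trace S k k e [e]
  | keep {i : ℕ} {e : Edge} {tr : List Edge} :
      i < k → e ∈ S (i + 1) → Trace S k (i + 1) e tr → Trace S k i e tr
  | move {i : ℕ} {e f : Edge} {tr : List Edge} :
      i < k → e ∉ S (i + 1) → f ∈ S (i + 1) → f ∉ S i →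
      Trace S k (i + 1) f tr → Trace S k i e (e :: tr)

/-- The number of flips of the sequence `S 0, …, S k` in which `e` is the
removed edge. -/
def removedCount (e : Edge) (k : ℕ) (S : ℕ → Finset Edge) : ℕ :=
  ((Finset.range k).filter fun i => e ∈ S i ∧ e ∉ S (i + 1)).card


end

-- ===================== auxiliary development =====================

def Reach (T : Finset Edge) : Point → Point → Prop :=
  Relation.ReflTransGen (fun x y => s(x,y) ∈ T)

lemma reach_refl (T : Finset Edge) (a : Point) : Reach T a a := Relation.ReflTransGen.refl

lemma reach_trans {T : Finset Edge} {a b c : Point} (h1 : Reach T a b) (h2 : Reach T b c) :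
    Reach T a c := Relation.ReflTransGen.trans h1 h2

lemma reach_single {T : Finset Edge} {a b : Point} (h : s(a,b) ∈ T) : Reach T a b :=
  Relation.ReflTransGen.single h

lemma reach_symm {T : Finset Edge} {a b : Point} (h : Reach T a b) : Reach T b a := by
  have : Symmetric (fun x y : Point => s(x,y) ∈ T) := by
    intro x y hxy; rwa [Sym2.eq_swap]
  haveI : Std.Symm (fun x y : Point => s(x,y) ∈ T) := ⟨this⟩
  exact (Relation.ReflTransGen.symmetric (r := fun x y : Point => s(x,y) ∈ T)).symm _ _ h

lemma reach_mono {T T' : Finset Edge} (hsub : T ⊆ T') {a b : Point} (h : Reach T a b) :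
    Reach T' a b := by
  induction h with
  | refl => exact reach_refl _ _
  | tail _ hstep ih => exact ih.tail (hsub hstep)

lemma reach_decomp {T : Finset Edge} {g : Edge} {c d a b : Point} (hg : g = s(c,d))
    (h : Reach T a b) :
    Reach (T.erase g) a b ∨ (Reach (T.erase g) a c ∧ Reach (T.erase g) d b) ∨
      (Reach (T.erase g) a d ∧ Reach (T.erase g) c b) := by
  induction h with
  | refl => exact Or.inl (reach_refl _ _)
  | @tail x y hxy hstep ih =>
    rcases eq_or_ne s(x,y) g with heq | hne
    · -- the step uses g
      rw [hg] at heq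
      rcases Sym2.eq_iff.1 heq with ⟨rfl, rfl⟩ | ⟨rfl, rfl⟩
      · -- x = c, y = d
        rcases ih with h1 | ⟨h1, h2⟩ | ⟨h1, h2⟩
        · exact Or.inr (Or.inl ⟨h1, reach_refl _ _⟩)
        · exact Or.inr (Or.inl ⟨h1, reach_refl _ _⟩)
        · exact Or.inl h1
      · -- x = d, y = c
        rcases ih with h1 | ⟨h1, h2⟩ | ⟨h1, h2⟩
        · exact Or.inr (Or.inr ⟨h1, reach_refl _ _⟩)
        · exact Or.inl h1
        · exact Or.inl (reach_trans h1 (reach_symm h2))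
    · -- the step avoids g
      have hmem : s(x,y) ∈ T.erase g := Finset.mem_erase.2 ⟨hne, hstep⟩
      rcases ih with h1 | ⟨h1, h2⟩ | ⟨h1, h2⟩
      · exact Or.inl (h1.tail hmem)
      · exact Or.inr (Or.inl ⟨h1, h2.tail hmem⟩)
      · exact Or.inr (Or.inr ⟨h1, h2.tail hmem⟩)

lemma reach_of_reconnect {T : Finset Edge} {g : Edge} {c d a b : Point} (hg : g = s(c,d))
    (hcd : Reach (T.erase g) c d) (h : Reach T a b) : Reach (T.erase g) a b := by
  rcases reach_decomp hg h with h1 | ⟨h1, h2⟩ | ⟨h1, h2⟩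
  · exact h1
  · exact reach_trans (reach_trans h1 hcd) h2
  · exact reach_trans (reach_trans h1 (reach_symm hcd)) h2

lemma reach_restrict {T : Finset Edge} {c x y : Point}
    (h : Reach T x y) (hx : Reach T x c) :
    Reach (T.filter (fun ed => ∃ p ∈ ed, Reach T p c)) x y := by
  induction h using Relation.ReflTransGen.head_induction_on with
  | refl => exact reach_refl _ _
  | @head z z' hstep hrest ih =>
    have hz' : Reach T z' c := reach_trans (reach_symm (reach_single hstep)) hx
    have hmem : s(z,z') ∈ T.filter (fun ed => ∃ p ∈ ed, Reach T p c) :=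
      Finset.mem_filter.2 ⟨hstep, ⟨z, by simp, hx⟩⟩
    exact reach_trans (reach_single hmem) (ih hz')

/-- A connected graph on vertex set `V` has at least `V.card - 1` edges. -/
lemma card_lower : ∀ n : ℕ, ∀ T : Finset Edge, T.card = n → ∀ V : Finset Point,
    (∀ e ∈ T, ∀ p ∈ e, p ∈ V) → (∀ x ∈ V, ∀ y ∈ V, Reach T x y) →
    V.card ≤ T.card + 1 := by
  intro n
  induction n using Nat.strong_induction_on with
  | _ n ih =>
  intro T hTn V hend hconn
  rcases Finset.eq_empty_or_nonempty T with rfl | ⟨g, hg⟩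
  · -- no edges: V has at most one point
    have : ∀ x ∈ V, ∀ y ∈ V, x = y := by
      intro x hx y hy
      have h := hconn x hx y hy
      induction h with
      | refl => rfl
      | tail _ hstep _ => simp at hstep
    simpa using Finset.card_le_one.2 (fun a ha b hb => this a ha b hb)
  · induction g using Sym2.ind with
    | _ c d =>
    have hc : c ∈ V := hend _ hg c (by simp)
    have hd : d ∈ V := hend _ hg d (by simp)
    set T' := T.erase s(c,d) with hT'
    have hT'card : T'.card = T.card - 1 := Finset.card_erase_of_mem hg
    have hTpos : 0 < T.card := Finset.card_pos.2 ⟨_, hg⟩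
    have hT'lt : T'.card < n := by omega
    rcases Classical.em (Reach T' c d) with hcd | hcd
    · -- still connected without g
      have hconn' : ∀ x ∈ V, ∀ y ∈ V, Reach T' x y := fun x hx y hy =>
        reach_of_reconnect rfl hcd (hconn x hx y hy)
      have := ih T'.card hT'lt T' rfl V
        (fun e he p hp => hend e (Finset.mem_of_mem_erase he) p hp) hconn'
      omega
    · -- split into two components
      set Vc := V.filter (fun x => Reach T' x c) with hVc
      set Vd := V \ Vc with hVd
      set Tc := T'.filter (fun ed => ∃ p ∈ ed, Reach T' p c) with hTc
      set Td := T'.filter (fun ed => ∃ p ∈ ed, Reach T' p d) with hTd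
      -- memberships
      have hVcd : ∀ x ∈ V, ¬ Reach T' x c → Reach T' x d := by
        intro x hx hxc
        rcases reach_decomp rfl (hconn x hx c hc) with h1 | ⟨h1, _⟩ | ⟨h1, _⟩
        · exact absurd h1 hxc
        · exact absurd h1 hxc
        · exact h1
      -- connectivity within Vc via Tc
      have hconnc : ∀ x ∈ Vc, ∀ y ∈ Vc, Reach Tc x y := by
        intro x hx y hy
        have hxc : Reach T' x c := (Finset.mem_filter.1 hx).2
        have hyc : Reach T' y c := (Finset.mem_filter.1 hy).2
        have hxV : x ∈ V := (Finset.mem_filter.1 hx).1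
        have hyV : y ∈ V := (Finset.mem_filter.1 hy).1
        have hxy : Reach T' x y := by
          rcases reach_decomp rfl (hconn x hxV y hyV) with h1 | ⟨h1, h2⟩ | ⟨h1, h2⟩
          · exact h1
          · exact absurd (reach_symm (reach_trans h2 hyc)) hcd
          · exact absurd (reach_symm (reach_trans (reach_symm h1) hxc)) hcd
        exact reach_restrict hxy hxc
      have hconnd : ∀ x ∈ Vd, ∀ y ∈ Vd, Reach Td x y := by
        intro x hx y hy
        have hxV : x ∈ V := (Finset.mem_sdiff.1 hx).1
        have hyV : y ∈ V := (Finset.mem_sdiff.1 hy).1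
        have hxc : ¬ Reach T' x c := by
          intro h; exact (Finset.mem_sdiff.1 hx).2 (Finset.mem_filter.2 ⟨hxV, h⟩)
        have hyc : ¬ Reach T' y c := by
          intro h; exact (Finset.mem_sdiff.1 hy).2 (Finset.mem_filter.2 ⟨hyV, h⟩)
        have hxd : Reach T' x d := hVcd x hxV hxc
        have hxy : Reach T' x y := by
          rcases reach_decomp rfl (hconn x hxV y hyV) with h1 | ⟨h1, h2⟩ | ⟨h1, h2⟩
          · exact h1
          · exact absurd h1 hxc
          · exact absurd (reach_symm h2) hyc
        exact reach_restrict hxy hxd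
      -- endpoints
      have hendc : ∀ e ∈ Tc, ∀ p ∈ e, p ∈ Vc := by
        intro e he p hp
        have he' := Finset.mem_filter.1 he
        obtain ⟨q, hq, hqc⟩ := he'.2
        have heT : e ∈ T := Finset.mem_of_mem_erase he'.1
        have hpq : Reach T' p q := by
          induction e using Sym2.ind with
          | _ x y =>
            rcases Sym2.mem_iff.1 hp with rfl | rfl <;> rcases Sym2.mem_iff.1 hq with rfl | rfl
            · exact reach_refl _ _
            · exact reach_single he'.1
            · exact reach_symm (reach_single he'.1)
            · exact reach_refl _ _
        exact Finset.mem_filter.2 ⟨hend e heT p hp, reach_trans hpq hqc⟩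
      have hendd : ∀ e ∈ Td, ∀ p ∈ e, p ∈ Vd := by
        intro e he p hp
        have he' := Finset.mem_filter.1 he
        obtain ⟨q, hq, hqd⟩ := he'.2
        have heT : e ∈ T := Finset.mem_of_mem_erase he'.1
        have hpq : Reach T' p q := by
          induction e using Sym2.ind with
          | _ x y =>
            rcases Sym2.mem_iff.1 hp with rfl | rfl <;> rcases Sym2.mem_iff.1 hq with rfl | rfl
            · exact reach_refl _ _
            · exact reach_single he'.1
            · exact reach_symm (reach_single he'.1)
            · exact reach_refl _ _
        refine Finset.mem_sdiff.2 ⟨hend e heT p hp, ?_⟩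
        intro hmem
        have hpc : Reach T' p c := (Finset.mem_filter.1 hmem).2
        exact hcd (reach_trans (reach_trans (reach_symm hpc) hpq) hqd)
      -- disjoint and cards
      have hdisj : Disjoint Tc Td := by
        rw [Finset.disjoint_left]
        intro e hec hed
        obtain ⟨q, hq, hqc⟩ := (Finset.mem_filter.1 hec).2
        obtain ⟨r, hr, hrd⟩ := (Finset.mem_filter.1 hed).2
        have heT' : e ∈ T' := (Finset.mem_filter.1 hec).1
        have hqr : Reach T' q r := by
          induction e using Sym2.ind with
          | _ x y =>
            rcases Sym2.mem_iff.1 hq with rfl | rfl <;> rcases Sym2.mem_iff.1 hr with rfl | rfl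
            · exact reach_refl _ _
            · exact reach_single heT'
            · exact reach_symm (reach_single heT')
            · exact reach_refl _ _
        exact hcd (reach_trans (reach_symm hqc) (reach_trans hqr hrd))
      have hTcsub : Tc ⊆ T' := Finset.filter_subset _ _
      have hTdsub : Td ⊆ T' := Finset.filter_subset _ _
      have hcardsum : Tc.card + Td.card ≤ T'.card := by
        rw [← Finset.card_union_of_disjoint hdisj]
        exact Finset.card_le_card (Finset.union_subset hTcsub hTdsub)
      have hc1 := ih Tc.card (by have := Finset.card_le_card hTcsub; omega) Tc rfl Vc hendc hconnc
      have hd1 := ih Td.card (by have := Finset.card_le_card hTdsub; omega) Td rfl Vd hendd hconnd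
      have hsubV : Vc ⊆ V := by rw [hVc]; exact Finset.filter_subset _ _
      have hVsplit : Vd.card = V.card - Vc.card := by rw [hVd]; exact Finset.card_sdiff_of_subset hsubV
      have hVle : Vc.card ≤ V.card := Finset.card_le_card hsubV
      omega

lemma cp_affine (u v x y : Point) (a b : ℝ) (h : a + b = 1) :
    crossProd u v (a • x + b • y) = a * crossProd u v x + b * crossProd u v y := by
  have hb : b = 1 - a := by linarith
  subst hb
  simp only [crossProd, Prod.fst_add, Prod.snd_add, Prod.smul_fst, Prod.smul_snd, smul_eq_mul]
  ring

lemma collinear_middle {a b c : Point} (hab : a ≠ b) (hac : a ≠ c) (hbc : b ≠ c)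
    (h : crossProd a b c = 0) :
    a ∈ segment ℝ b c ∨ b ∈ segment ℝ a c ∨ c ∈ segment ℝ a b := by
  have hex : ∃ s : ℝ, c = (1-s) • a + s • b := by
    rcases eq_or_ne a.1 b.1 with h1 | h1
    · have h2 : a.2 ≠ b.2 := fun h2 => hab (Prod.ext h1 h2)
      have hd : b.2 - a.2 ≠ 0 := fun h' => h2 (by linarith)
      refine ⟨(c.2 - a.2)/(b.2 - a.2), ?_⟩
      have hc1 : c.1 = a.1 := by
        have := h
        simp only [crossProd, h1] at this
        have h3 : (b.2 - a.2) * (c.1 - b.1) = 0 := by linarith [this]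
        rcases mul_eq_zero.1 h3 with h' | h'
        · exact absurd h' hd
        · rw [h1]; linarith
      have hkey : (c.2 - a.2)/(b.2 - a.2) * (b.2 - a.2) = c.2 - a.2 := by field_simp
      apply Prod.ext <;>
        simp only [Prod.fst_add, Prod.snd_add, Prod.smul_fst, Prod.smul_snd, smul_eq_mul]
      · rw [hc1, ← h1]; ring
      · linear_combination -hkey
    · have hd : b.1 - a.1 ≠ 0 := fun h' => h1 (by linarith)
      refine ⟨(c.1 - a.1)/(b.1 - a.1), ?_⟩
      have hc2 : c.2 - a.2 = (c.1 - a.1)/(b.1 - a.1) * (b.2 - a.2) := by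
        field_simp
        unfold crossProd at h
        nlinarith [h]
      have hkey : (c.1 - a.1)/(b.1 - a.1) * (b.1 - a.1) = c.1 - a.1 := by field_simp
      apply Prod.ext <;>
        simp only [Prod.fst_add, Prod.snd_add, Prod.smul_fst, Prod.smul_snd, smul_eq_mul]
      · linear_combination -hkey
      · linear_combination hc2
  obtain ⟨s, hs⟩ := hex
  have hs0 : s ≠ 0 := by rintro rfl; simp at hs; exact hac hs.symm
  have hs1 : s ≠ 1 := by rintro rfl; simp at hs; exact hbc hs.symm
  rcases lt_trichotomy s 0 with hlt | h0 | hgt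
  · left
    rw [segment_symm]
    have h1s : (0:ℝ) < 1 - s := by linarith
    have h1s' : (1:ℝ) - s ≠ 0 := ne_of_gt h1s
    refine ⟨1/(1-s), -s/(1-s), by positivity, ?_, by field_simp; ring, ?_⟩
    · apply div_nonneg <;> linarith
    · rw [hs]
      apply Prod.ext <;>
        simp only [Prod.fst_add, Prod.snd_add, Prod.smul_fst, Prod.smul_snd, smul_eq_mul] <;>
        field_simp <;> ring
  · exact absurd h0 hs0
  · rcases lt_trichotomy s 1 with hlt1 | h1 | hgt1
    · right; right
      exact ⟨1-s, s, by linarith, le_of_lt hgt, by ring, hs.symm⟩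
    · exact absurd h1 hs1
    · right; left
      have hspos : (0:ℝ) < s := by linarith
      have hsne : s ≠ 0 := ne_of_gt hspos
      refine ⟨1 - 1/s, 1/s, ?_, by positivity, by ring, ?_⟩
      · have : 1/s < 1 := by rw [div_lt_one hspos]; linarith
        linarith
      · rw [hs]
        apply Prod.ext <;>
          simp only [Prod.fst_add, Prod.snd_add, Prod.smul_fst, Prod.smul_snd, smul_eq_mul] <;>
          field_simp <;> ring

lemma no3col {P : Finset Point} (hP : ConvexPos P) {a b c : Point}
    (ha : a ∈ P) (hb : b ∈ P) (hc : c ∈ P)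
    (hab : a ≠ b) (hac : a ≠ c) (hbc : b ≠ c) : crossProd a b c ≠ 0 := by
  intro h
  have key : ∀ x y m : Point, x ∈ P → y ∈ P → m ∈ P → m ≠ x → m ≠ y →
      m ∈ segment ℝ x y → False := by
    intro x y m hx hy hm hmx hmy hseg
    apply hP m hm
    have h1 : segment ℝ x y ⊆ convexHull ℝ ((P : Set Point) \ {m}) := by
      rw [← convexHull_pair]
      apply convexHull_mono
      intro z hz
      simp at hz
      rcases hz with rfl | rfl
      · exact ⟨hx, by simpa using hmx.symm⟩
      · exact ⟨hy, by simpa using hmy.symm⟩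
    exact h1 hseg
  rcases collinear_middle hab hac hbc h with h' | h' | h'
  · exact key b c a hb hc ha hab hac h'
  · exact key a c b ha hc hb hab.symm hbc h'
  · exact key a b c ha hb hc hac.symm hbc.symm h'


lemma mem_triangle {x y z w : Point}
    (h1 : 0 < crossProd x y w) (h2 : 0 < crossProd y z w) (h3 : 0 < crossProd z x w) :
    w ∈ convexHull ℝ ({x, y, z} : Set Point) := by
  set a := crossProd y z w with ha
  set b := crossProd z x w with hbdef
  set c := crossProd x y w with hcdef
  have hS : (0:ℝ) < a + b + c := by positivity
  have hid : a • x + b • y + c • z = (a+b+c) • w := by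
    apply Prod.ext <;>
      simp only [crossProd, ha, hbdef, hcdef, Prod.fst_add, Prod.snd_add, Prod.smul_fst,
        Prod.smul_snd, smul_eq_mul] <;> ring
  have : (Finset.univ : Finset (Fin 3)).centerMass ![a,b,c] ![x,y,z]
      ∈ convexHull ℝ ({x, y, z} : Set Point) := by
    apply Finset.centerMass_mem_convexHull
    · intro i _; fin_cases i <;> simp <;> positivity
    · simp [Fin.sum_univ_three]; exact hS
    · intro i _; fin_cases i <;> simp
  have hcm : (Finset.univ : Finset (Fin 3)).centerMass ![a,b,c] ![x,y,z] = w := by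
    rw [Finset.centerMass]
    simp only [Fin.sum_univ_three, Matrix.cons_val_zero, Matrix.cons_val_one, Matrix.head_cons,
      Matrix.cons_val_two, Matrix.tail_cons]
    rw [hid, smul_smul, inv_mul_cancel₀ (ne_of_gt hS), one_smul]
  rwa [hcm] at this

lemma cp_cyclic (p q r : Point) : crossProd p q r = crossProd q r p := by
  simp only [crossProd]; ring
lemma cp_swap23 (p q r : Point) : crossProd p q r = - crossProd p r q := by
  simp only [crossProd]; ring
lemma cp_swap12 (p q r : Point) : crossProd p q r = - crossProd q p r := by
  simp only [crossProd]; ring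
lemma cp_swap13 (p q r : Point) : crossProd r q p = - crossProd p q r := by
  simp only [crossProd]; ring
lemma cp_self_right (u v : Point) : crossProd u v v = 0 := by simp only [crossProd]; ring
lemma cp_self_left (u v : Point) : crossProd u v u = 0 := by simp only [crossProd]; ring

lemma cp_zero_of_mem_seg {u v p : Point} (hp : p ∈ segment ℝ u v) :
    crossProd u v p = 0 := by
  obtain ⟨a, b, ha, hb, hab, rfl⟩ := hp
  rw [cp_affine u v u v a b hab, cp_self_left, cp_self_right]; ring

lemma crosses_symm {e f : Edge} (h : Crosses e f) : Crosses f e := by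
  obtain ⟨hne, p, h1, h2, h3⟩ := h
  exact ⟨hne.symm, p, h2, h1, fun ⟨x, y⟩ => h3 ⟨y, x⟩⟩

private lemma hull_no_cross_aux {P : Finset Point} {u v : Point} {f : Edge}
    (hu : u ∈ P) (hv : v ∈ P) (huv : u ≠ v)
    (hpos : ∀ w ∈ P, w ≠ u → w ≠ v → 0 < crossProd u v w)
    (hf : ∀ p ∈ f, p ∈ P) (hnd : ¬ f.IsDiag) :
    ¬ Crosses s(u,v) f := by
  induction f using Sym2.ind with
  | _ a b =>
  rintro ⟨hne, p, hpe, hpf, hnend⟩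
  have ha : a ∈ P := hf a (by simp)
  have hb : b ∈ P := hf b (by simp)
  have hab : a ≠ b := fun h => hnd (Sym2.mk_isDiag_iff.2 h)
  have hcp : crossProd u v p = 0 := cp_zero_of_mem_seg hpe
  obtain ⟨α, β, hα, hβ, hαβ, hp⟩ := hpf
  have hcomb : crossProd u v p = α * crossProd u v a + β * crossProd u v b := by
    rw [← hp]; exact cp_affine u v a b α β hαβ
  have hca : a = u ∨ a = v ∨ 0 < crossProd u v a := by
    rcases eq_or_ne a u with h | h; · left; exact h
    rcases eq_or_ne a v with h' | h'; · right; left; exact h'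
    · right; right; exact hpos a ha h h'
  have hcb : b = u ∨ b = v ∨ 0 < crossProd u v b := by
    rcases eq_or_ne b u with h | h; · left; exact h
    rcases eq_or_ne b v with h' | h'; · right; left; exact h'
    · right; right; exact hpos b hb h h'
  have hzca : a = u ∨ a = v → crossProd u v a = 0 := by
    rintro (h | h)
    · rw [h]; exact cp_self_left u v
    · rw [h]; exact cp_self_right u v
  have hzcb : b = u ∨ b = v → crossProd u v b = 0 := by
    rintro (h | h)
    · rw [h]; exact cp_self_left u v
    · rw [h]; exact cp_self_right u v
  -- case analysis
  rcases hca with h | h | hA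
  · rcases hcb with h' | h' | hB
    · exact hab (h.trans h'.symm)
    · exact hne (by rw [h, h'])
    · -- a ∈ {u,v}, cb > 0 : p = a
      have hca0 : crossProd u v a = 0 := hzca (Or.inl h)
      have hβ0 : β = 0 := by nlinarith
      have hα1 : α = 1 := by linarith
      have hpa : p = a := by rw [← hp, hβ0, hα1]; simp
      exact hnend ⟨by simp [hpa, h], by simp [hpa]⟩
  · rcases hcb with h' | h' | hB
    · exact hne (by rw [h, h', Sym2.eq_swap])
    · exact hab (h.trans h'.symm)
    · have hca0 : crossProd u v a = 0 := hzca (Or.inr h)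
      have hβ0 : β = 0 := by nlinarith
      have hα1 : α = 1 := by linarith
      have hpa : p = a := by rw [← hp, hβ0, hα1]; simp
      exact hnend ⟨by simp [hpa, h], by simp [hpa]⟩
  · rcases hcb with h' | h' | hB
    · have hcb0 : crossProd u v b = 0 := hzcb (Or.inl h')
      have hα0 : α = 0 := by nlinarith
      have hβ1 : β = 1 := by linarith
      have hpb : p = b := by rw [← hp, hα0, hβ1]; simp
      exact hnend ⟨by simp [hpb, h'], by simp [hpb]⟩
    · have hcb0 : crossProd u v b = 0 := hzcb (Or.inr h')
      have hα0 : α = 0 := by nlinarith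
      have hβ1 : β = 1 := by linarith
      have hpb : p = b := by rw [← hp, hα0, hβ1]; simp
      exact hnend ⟨by simp [hpb, h'], by simp [hpb]⟩
    · have h1 : 0 ≤ α * crossProd u v a := mul_nonneg hα hA.le
      have h2 : 0 ≤ β * crossProd u v b := mul_nonneg hβ hB.le
      have ha0 : α * crossProd u v a = 0 := by linarith
      have hb0 : β * crossProd u v b = 0 := by linarith
      have hα0 : α = 0 := by
        rcases mul_eq_zero.1 ha0 with h | h
        · exact h
        · linarith
      have hβ0 : β = 0 := by
        rcases mul_eq_zero.1 hb0 with h | h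
        · exact h
        · linarith
      linarith

lemma hull_edge_no_cross {P : Finset Point} {e f : Edge}
    (hhull : IsHullEdge P e) (hf : ∀ p ∈ f, p ∈ P) (hnd : ¬ f.IsDiag) :
    ¬ Crosses e f := by
  obtain ⟨u, v, rfl, hu, hv, huv, hside | hside⟩ := hhull
  · exact hull_no_cross_aux hu hv huv hside hf hnd
  · rw [Sym2.eq_swap]
    apply hull_no_cross_aux hv hu huv.symm _ hf hnd
    intro w hw hwv hwu
    have := hside w hw hwu hwv
    rw [cp_swap12]
    linarith

/-- key lemma for building the hull path: a consecutive pair in angular order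
around u is a hull edge. -/
lemma consec_hull {P : Finset Point} (hP : ConvexPos P) {u a b : Point}
    (hu : u ∈ P) (ha : a ∈ P) (hb : b ∈ P) (hau : a ≠ u) (hbu : b ≠ u) (hab : a ≠ b)
    (hord : 0 < crossProd u a b)
    (hmid : ∀ w ∈ P, w ≠ u → w ≠ a → w ≠ b → 0 < crossProd u w a ∨ 0 < crossProd u b w) :
    IsHullEdge P s(a, b) := by
  refine ⟨a, b, rfl, ha, hb, hab, Or.inl ?_⟩
  intro w hw hwa hwb
  rcases eq_or_ne w u with rfl | hwu
  · rw [cp_cyclic] at hord; exact hord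
  by_contra hle
  push_neg at hle
  have hne0 : crossProd a b w ≠ 0 := no3col hP ha hb hw hab (Ne.symm hwa) (Ne.symm hwb)
  have hneg : crossProd a b w < 0 := lt_of_le_of_ne hle hne0
  rcases hmid w hw hwu hwa hwb with hbefore | hafter
  · -- a ∈ hull {u, w, b}
    apply hP a ha
    have h1 : 0 < crossProd u w a := hbefore
    have h2 : 0 < crossProd w b a := by rw [cp_swap13 a b w]; linarith
    have h3 : 0 < crossProd b u a := by
      rw [cp_cyclic] at hord; rw [cp_cyclic] at hord; exact hord
    have := mem_triangle h1 h2 h3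
    apply convexHull_mono _ this
    intro z hz
    simp only [Set.mem_insert_iff, Set.mem_singleton_iff] at hz
    rcases hz with rfl | rfl | rfl
    · exact ⟨hu, by simpa using hau.symm⟩
    · exact ⟨hw, by simpa using hwa⟩
    · exact ⟨hb, by simpa using hab.symm⟩
  · -- b ∈ hull {u, a, w}
    apply hP b hb
    have h1 : 0 < crossProd u a b := hord
    have h2 : 0 < crossProd a w b := by rw [cp_swap23 a w b]; linarith
    have h3 : 0 < crossProd w u b := by
      rw [cp_cyclic] at hafter; rw [cp_cyclic] at hafter; exact hafter
    have := mem_triangle h1 h2 h3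
    apply convexHull_mono _ this
    intro z hz
    simp only [Set.mem_insert_iff, Set.mem_singleton_iff] at hz
    rcases hz with rfl | rfl | rfl
    · exact ⟨hu, by simpa using hbu.symm⟩
    · exact ⟨ha, by simpa using hab⟩
    · exact ⟨hw, by simpa using hwb⟩

lemma pst_reach {P : Finset Point} {T : Finset Edge} (hT : IsPST P T)
    {x y : Point} (hx : x ∈ P) (hy : y ∈ P) : Reach T x y := hT.connected x hx y hy

lemma pst_bridge {P : Finset Point} {T : Finset Edge} (hT : IsPST P T)
    {c d : Point} (hg : s(c,d) ∈ T) : ¬ Reach (T.erase s(c,d)) c d := by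
  intro h
  have hconn' : ∀ x ∈ P, ∀ y ∈ P, Reach (T.erase s(c,d)) x y := fun x hx y hy =>
    reach_of_reconnect rfl h (pst_reach hT hx hy)
  have hcard := card_lower _ (T.erase s(c,d)) rfl P
    (fun e he p hp => hT.endpoints_mem e (Finset.mem_of_mem_erase he) p hp) hconn'
  have h1 : (T.erase s(c,d)).card = T.card - 1 := Finset.card_erase_of_mem hg
  have h2 : 0 < T.card := Finset.card_pos.2 ⟨_, hg⟩
  have h3 := hT.card_eq
  omega

/-- every vertex is in the component of c or of d after removing the tree edge cd -/
lemma pst_comp {P : Finset Point} {T : Finset Edge} (hT : IsPST P T)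
    {c d : Point} (hcP : c ∈ P) {x : Point} (hx : x ∈ P) :
    Reach (T.erase s(c,d)) x c ∨ Reach (T.erase s(c,d)) x d := by
  rcases reach_decomp rfl (pst_reach hT hx hcP) with h1 | ⟨h1, _⟩ | ⟨h1, _⟩
  · exact Or.inl h1
  · exact Or.inl h1
  · exact Or.inr h1

lemma pst_reconnect {P : Finset Point} {T : Finset Edge} (hT : IsPST P T)
    {c d a b : Point} (hg : s(c,d) ∈ T) (hcP : c ∈ P)
    (hac : Reach (T.erase s(c,d)) a c) (hbd : Reach (T.erase s(c,d)) b d) :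
    ∀ x ∈ P, ∀ y ∈ P, Reach (insert s(a,b) (T.erase s(c,d))) x y := by
  set T0 := T.erase s(c,d) with hT0
  set T1 := insert s(a,b) T0 with hT1
  have hsub : T0 ⊆ T1 := Finset.subset_insert _ _
  have hcd1 : Reach T1 c d := by
    refine reach_trans (reach_symm (reach_mono hsub hac)) ?_
    refine reach_trans (reach_single (Finset.mem_insert_self _ _)) ?_
    exact reach_mono hsub hbd
  have hkey : ∀ x ∈ P, Reach T1 x c := by
    intro x hx
    rcases pst_comp hT hcP hx with h | h
    · exact reach_mono hsub h
    · exact reach_trans (reach_mono hsub h) (reach_symm hcd1)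
  intro x hx y hy
  exact reach_trans (hkey x hx) (reach_symm (hkey y hy))

lemma no_reconnect {T0 : Finset Edge} {c d p q : Point}
    (hnc : ¬ Reach T0 c d) (hy : s(p,q) ∉ T0)
    (hpc : Reach T0 p c) (hqc : Reach T0 q c) :
    ¬ Reach (insert s(p,q) T0) c d := by
  intro h
  have herase : (insert s(p,q) T0).erase s(p,q) = T0 := Finset.erase_insert hy
  rcases reach_decomp (g := s(p,q)) rfl h with h1 | ⟨h1, h2⟩ | ⟨h1, h2⟩
  · rw [herase] at h1; exact hnc h1
  · rw [herase] at h1 h2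
    exact hnc (reach_trans (reach_symm hqc) h2)
  · rw [herase] at h1 h2
    exact hnc (reach_trans (reach_symm hpc) h2)

lemma hull_edge_basic {P : Finset Point} {e : Edge} (h : IsHullEdge P e) :
    (∀ p ∈ e, p ∈ P) ∧ ¬ e.IsDiag := by
  obtain ⟨u, v, rfl, hu, hv, huv, _⟩ := h
  constructor
  · intro p hp
    rcases Sym2.mem_iff.1 hp with rfl | rfl
    · exact hu
    · exact hv
  · exact fun hd => huv (Sym2.mk_isDiag_iff.1 hd)

lemma crosses_irrefl (e : Edge) : ¬ Crosses e e := fun ⟨h, _⟩ => h rfl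

/-- assembling a PST by swapping in a hull edge -/
lemma pst_swap {P : Finset Point} {T : Finset Edge} {e y : Edge} (hT : IsPST P T)
    (hhull : IsHullEdge P e) (heT : e ∉ T) (hy : y ∈ T)
    (hconn : ∀ x ∈ P, ∀ z ∈ P, Reach (insert e (T.erase y)) x z) :
    IsPST P (insert e (T.erase y)) := by
  obtain ⟨hend_e, hloop_e⟩ := hull_edge_basic hhull
  constructor
  · intro f hf p hp
    rcases Finset.mem_insert.1 hf with rfl | hf'
    · exact hend_e p hp
    · exact hT.endpoints_mem f (Finset.mem_of_mem_erase hf') p hp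
  · intro f hf
    rcases Finset.mem_insert.1 hf with rfl | hf'
    · exact hloop_e
    · exact hT.not_loop f (Finset.mem_of_mem_erase hf')
  · have h1 : e ∉ T.erase y := fun h => heT (Finset.mem_of_mem_erase h)
    rw [Finset.card_insert_of_notMem h1, Finset.card_erase_of_mem hy]
    have h2 : 0 < T.card := Finset.card_pos.2 ⟨_, hy⟩
    have h3 := hT.card_eq
    omega
  · exact hconn
  · intro f1 hf1 f2 hf2
    rcases Finset.mem_insert.1 hf1 with rfl | hf1' <;> rcases Finset.mem_insert.1 hf2 with rfl | hf2'
    · exact crosses_irrefl _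
    · have hf2T := Finset.mem_of_mem_erase hf2'
      exact hull_edge_no_cross hhull (hT.endpoints_mem f2 hf2T) (hT.not_loop f2 hf2T)
    · have hf1T := Finset.mem_of_mem_erase hf1'
      exact fun hc => hull_edge_no_cross hhull (hT.endpoints_mem f1 hf1T)
        (hT.not_loop f1 hf1T) (crosses_symm hc)
    · exact hT.noncrossing f1 (Finset.mem_of_mem_erase hf1') f2 (Finset.mem_of_mem_erase hf2')

def IsForest (T : Finset Edge) : Prop :=
  ∀ c d : Point, s(c,d) ∈ T → ¬ Reach (T.erase s(c,d)) c d

lemma pst_forest {P : Finset Point} {T : Finset Edge} (hT : IsPST P T) : IsForest T :=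
  fun _ _ hg => pst_bridge hT hg

lemma forest_erase {T : Finset Edge} (h : IsForest T) (g : Edge) : IsForest (T.erase g) := by
  intro c d hcd hre
  exact h c d (Finset.mem_of_mem_erase hcd)
    (reach_mono (fun x hx => by
      have := Finset.mem_erase.1 hx
      have h2 := Finset.mem_erase.1 this.2
      exact Finset.mem_erase.2 ⟨this.1, h2.2⟩) hre)

/-- if a and b are connected in a forest T but not within T ∩ H, then some
edge of T outside H is an (a,b)-bridge of T -/
lemma forest_sep (H : Finset Edge) : ∀ N : ℕ, ∀ T : Finset Edge, T.card = N →
    IsForest T → ∀ a b : Point, Reach T a b → ¬ Reach (T ∩ H) a b →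
    ∃ g ∈ T, g ∉ H ∧ ¬ Reach (T.erase g) a b := by
  intro N
  induction N using Nat.strong_induction_on with
  | _ N ihN =>
  intro T hTN hforest a b hreach
  induction hreach using Relation.ReflTransGen.head_induction_on with
  | refl => exact fun hn => absurd (reach_refl _ _) hn
  | @head z z' hstep hrest ih =>
    intro hnab
    by_cases hzH : s(z,z') ∈ H
    · have hn' : ¬ Reach (T ∩ H) z' b := fun h =>
        hnab (reach_trans (reach_single (Finset.mem_inter.2 ⟨hstep, hzH⟩)) h)
      obtain ⟨g, hgT, hgH, hgnb⟩ := ih hn'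
      refine ⟨g, hgT, hgH, ?_⟩
      intro hzb
      have hedge : s(z,z') ∈ T.erase g :=
        Finset.mem_erase.2 ⟨fun hq => hgH (hq ▸ hzH), hstep⟩
      exact hgnb (reach_trans (reach_symm (reach_single hedge)) hzb)
    · by_cases hrem : Reach (T.erase s(z,z')) z b
      · have hEq : T.erase s(z,z') ∩ H = T ∩ H := by
          ext x
          simp only [Finset.mem_inter, Finset.mem_erase]
          constructor
          · rintro ⟨⟨_, h1⟩, h2⟩; exact ⟨h1, h2⟩
          · rintro ⟨h1, h2⟩; exact ⟨⟨fun hx => hzH (hx ▸ h2), h1⟩, h2⟩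
        have hncap : ¬ Reach (T.erase s(z,z') ∩ H) z b := by rw [hEq]; exact hnab
        have hlt : (T.erase s(z,z')).card < N := by
          have := Finset.card_erase_of_mem hstep
          have hpos : 0 < T.card := Finset.card_pos.2 ⟨_, hstep⟩
          omega
        obtain ⟨g, hgT', hgH, hgnb⟩ := ihN _ hlt (T.erase s(z,z')) rfl
          (forest_erase hforest _) z b hrem hncap
        have hbr : ¬ Reach (T.erase s(z,z')) z z' := hforest z z' hstep
        refine ⟨g, Finset.mem_of_mem_erase hgT', hgH, ?_⟩
        intro h
        have hcomm : (T.erase g).erase s(z,z') = (T.erase s(z,z')).erase g :=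
          Finset.erase_right_comm
        rcases reach_decomp (g := s(z,z')) rfl h with h1 | ⟨h1, h2⟩ | ⟨h1, h2⟩
        · rw [hcomm] at h1; exact hgnb h1
        · rw [hcomm] at h2
          have hz'b : Reach (T.erase s(z,z')) z' b := reach_mono (Finset.erase_subset _ _) h2
          exact hbr (reach_trans hrem (reach_symm hz'b))
        · rw [hcomm] at h1
          exact hbr (reach_mono (Finset.erase_subset _ _) h1)
      · exact ⟨s(z,z'), hstep, hzH, hrem⟩

theorem exists_hull_tree (P : Finset Point) (hP : ConvexPos P) (hne : P.Nonempty) :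
    ∃ HP : Finset Edge, IsPST P HP ∧ ∀ e ∈ HP, IsHullEdge P e := by
  obtain ⟨u, hu⟩ := hne
  -- separating functional
  have hclosed : IsClosed (convexHull ℝ ((P : Set Point) \ {u})) :=
    Set.Finite.isClosed_convexHull ℝ ((P.finite_toSet).subset Set.diff_subset)
  have hconv : Convex ℝ (convexHull ℝ ((P : Set Point) \ {u})) := convex_convexHull ℝ _
  obtain ⟨ℓ, cthr, hcu, hcall⟩ := geometric_hahn_banach_point_closed hconv hclosed (hP u hu)
  set n1 : ℝ := ℓ (1, 0) with hn1
  set n2 : ℝ := ℓ (0, 1) with hn2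
  have hℓ : ∀ x : Point, ℓ x = x.1 * n1 + x.2 * n2 := by
    intro x
    have hx : x = x.1 • ((1:ℝ), (0:ℝ)) + x.2 • ((0:ℝ), (1:ℝ)) := by
      apply Prod.ext <;> simp
    conv_lhs => rw [hx]
    rw [map_add, map_smul, map_smul, smul_eq_mul, smul_eq_mul]
  have hlam : ∀ w ∈ P, w ≠ u → 0 < n1 * (w.1 - u.1) + n2 * (w.2 - u.2) := by
    intro w hw hwu
    have hwmem : w ∈ convexHull ℝ ((P : Set Point) \ {u}) :=
      subset_convexHull ℝ _ ⟨hw, by simpa using hwu⟩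
    have := hcall w hwmem
    have h1 := hℓ w
    have h2 := hℓ u
    nlinarith
  -- the order on points other than u
  set α := {z : Point // z ∈ P.erase u} with hα
  set r : α → α → Prop := fun a b => 0 < crossProd u a.val b.val ∨ a = b with hr
  have hmemP : ∀ a : α, a.val ∈ P := fun a => Finset.mem_of_mem_erase a.2
  have hneu : ∀ a : α, a.val ≠ u := fun a => (Finset.mem_erase.1 a.2).1
  have hlam' : ∀ a : α, 0 < n1 * (a.val.1 - u.1) + n2 * (a.val.2 - u.2) :=
    fun a => hlam a.val (hmemP a) (hneu a)
  have cpswap : ∀ x y : Point, crossProd u y x = - crossProd u x y := by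
    intro x y; simp only [crossProd]; ring
  haveI : DecidableRel r := fun a b => Classical.dec _
  haveI hTot : IsTotal α r := by
    constructor
    intro a b
    rcases eq_or_ne a b with rfl | hne
    · exact Or.inl (Or.inr rfl)
    · have hval : a.val ≠ b.val := fun h => hne (Subtype.ext h)
      have := no3col hP hu (hmemP a) (hmemP b) (hneu a).symm (hneu b).symm hval
      rcases lt_trichotomy (crossProd u a.val b.val) 0 with hlt | heq | hgt
      · right; left; rw [cpswap]; linarith
      · exact absurd heq this
      · left; left; exact hgt
  haveI hTrans : IsTrans α r := by
    constructor
    rintro a b c (hab | rfl) (hbc | rfl)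
    · left
      have hid : crossProd u a.val c.val * (n1 * (b.val.1 - u.1) + n2 * (b.val.2 - u.2)) =
          crossProd u a.val b.val * (n1 * (c.val.1 - u.1) + n2 * (c.val.2 - u.2)) +
          crossProd u b.val c.val * (n1 * (a.val.1 - u.1) + n2 * (a.val.2 - u.2)) := by
        simp only [crossProd]; ring
      have h1 := hlam' a
      have h2 := hlam' b
      have h3 := hlam' c
      nlinarith
    · exact Or.inl hab
    · exact Or.inl hbc
    · exact Or.inr rfl
  haveI hAnti : IsAntisymm α r := by
    constructor
    rintro a b (hab | rfl) (hba | hba)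
    · rw [cpswap] at hba; linarith
    · exact hba.symm
    · rfl
    · rfl
  -- sorted list
  set L : List α := Finset.sort (P.erase u).attach r with hL
  have hLsorted : L.Pairwise r := Finset.pairwise_sort _ r
  have hLnodup : L.Nodup := Finset.sort_nodup _ r
  have hLmem : ∀ a : α, a ∈ L := fun a => (Finset.mem_sort r).2 (Finset.mem_attach _ a)
  have hLlen : L.length = (P.erase u).card := by
    rw [hL, Finset.length_sort, Finset.card_attach]
  have hstrict : ∀ (i j : Fin L.length), i < j →
      0 < crossProd u (L.get i).val (L.get j).val := by
    intro i j hij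
    have hr := List.Pairwise.rel_get_of_lt hLsorted hij
    rcases hr with h | h
    · exact h
    · exact absurd (hLnodup.get_inj_iff.1 h) (by omega)
  -- the spine
  set M : List Point := u :: L.map Subtype.val with hM
  have hMlen : M.length = P.card := by
    rw [hM]
    simp only [List.length_cons, List.length_map]
    rw [hLlen, Finset.card_erase_of_mem hu]
    have : 0 < P.card := Finset.card_pos.2 ⟨u, hu⟩
    omega
  have hMnodup : M.Nodup := by
    rw [hM]
    refine List.nodup_cons.2 ⟨?_, hLnodup.map Subtype.val_injective⟩
    intro hmem
    obtain ⟨a, _, ha⟩ := List.mem_map.1 hmem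
    exact hneu a ha
  have hMmem : ∀ x : Point, x ∈ M ↔ x ∈ P := by
    intro x
    rw [hM]
    simp only [List.mem_cons, List.mem_map]
    constructor
    · rintro (rfl | ⟨a, _, rfl⟩)
      · exact hu
      · exact hmemP a
    · intro hx
      rcases eq_or_ne x u with rfl | hxu
      · exact Or.inl rfl
      · exact Or.inr ⟨⟨x, Finset.mem_erase.2 ⟨hxu, hx⟩⟩, hLmem _, rfl⟩
  have hMget0 : ∀ (h : 0 < M.length), M.get ⟨0, h⟩ = u := by intro h; rfl
  have hMgetL : ∀ (k : ℕ) (h : k + 1 < M.length),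
      M.get ⟨k+1, h⟩ = (L.get ⟨k, by rw [hM] at h; simpa using h⟩).val := by
    intro k h
    have h1 : M.get ⟨k+1, h⟩ = (L.map Subtype.val).get ⟨k, by rw [hM] at h; simpa using h⟩ := rfl
    rw [h1]; simp
  -- consecutive pairs are hull edges
  have hMgetP : ∀ (i : Fin M.length), M.get i ∈ P :=
    fun i => (hMmem _).1 (List.get_mem M i)
  have hvalne : ∀ (i j : Fin L.length), i ≠ j → (L.get i).val ≠ (L.get j).val := by
    intro i j hij heq
    exact hij (hLnodup.get_inj_iff.1 (Subtype.val_injective heq))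
  have hgetLmem : ∀ w, w ∈ P → w ≠ u → ∃ j : Fin L.length, (L.get j).val = w := by
    intro w hw hwu
    have : (⟨w, Finset.mem_erase.2 ⟨hwu, hw⟩⟩ : α) ∈ L := hLmem _
    obtain ⟨j, hj⟩ := List.mem_iff_get.1 this
    exact ⟨j, by rw [hj]⟩
  have hcons : ∀ (i : ℕ) (h : i + 1 < M.length),
      IsHullEdge P s(M.get ⟨i, by omega⟩, M.get ⟨i+1, h⟩) := by
    intro i h
    have hMLlen : M.length = L.length + 1 := by rw [hM]; simp
    match i with
    | 0 =>
      have h0L : 0 < L.length := by omega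
      have e1 : M.get ⟨1, h⟩ = (L.get ⟨0, h0L⟩).val := hMgetL 0 h
      have e0 : M.get ⟨0, by omega⟩ = u := hMget0 _
      rw [e0, e1]
      refine ⟨u, (L.get ⟨0, h0L⟩).val, rfl, hu, hmemP _, (hneu _).symm, Or.inl ?_⟩
      intro w hw hwu hwb
      obtain ⟨j, hj⟩ := hgetLmem w hw hwu
      have hj0 : (⟨0, h0L⟩ : Fin L.length) < j := by
        rw [Fin.lt_def]
        rcases Nat.eq_zero_or_pos j.val with h0 | h0
        · exfalso; apply hwb; rw [← hj]; exact congrArg _ (congrArg _ (Fin.ext (by simp [h0])))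
        · simpa using h0
      have := hstrict _ j hj0
      rw [hj] at this
      exact this
    | Nat.succ k =>
      have hkL : k < L.length := by omega
      have hk1L : k + 1 < L.length := by omega
      have hAB : (L.get ⟨k, hkL⟩).val ≠ (L.get ⟨k+1, hk1L⟩).val :=
        hvalne _ _ (by intro hc; have := congrArg Fin.val hc; simp at this)
      have hord : 0 < crossProd u (L.get ⟨k, hkL⟩).val (L.get ⟨k+1, hk1L⟩).val :=
        hstrict _ _ (by rw [Fin.lt_def]; simp)
      have hmain : IsHullEdge P s((L.get ⟨k, hkL⟩).val, (L.get ⟨k+1, hk1L⟩).val) := by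
        apply consec_hull hP hu (hmemP _) (hmemP _) (hneu _) (hneu _) hAB hord
        intro w hw hwu hwa hwb
        obtain ⟨j, hj⟩ := hgetLmem w hw hwu
        have hjk : j.val ≠ k := by
          intro hjeq; apply hwa; rw [← hj]
          exact congrArg _ (congrArg _ (Fin.ext (by simp [hjeq])))
        have hjk1 : j.val ≠ k + 1 := by
          intro hjeq; apply hwb; rw [← hj]
          exact congrArg _ (congrArg _ (Fin.ext (by simp [hjeq])))
        rcases lt_or_gt_of_ne hjk with hlt | hgt
        · left
          have := hstrict j ⟨k, hkL⟩ (by rw [Fin.lt_def]; simpa using hlt)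
          rw [hj] at this
          exact this
        · right
          have := hstrict ⟨k+1, hk1L⟩ j (by rw [Fin.lt_def]; simp; omega)
          rw [hj] at this
          exact this
      have e1 : M.get ⟨k+1, by omega⟩ = (L.get ⟨k, hkL⟩).val := hMgetL k (by omega)
      have e2 : M.get ⟨k+1+1, h⟩ = (L.get ⟨k+1, hk1L⟩).val := hMgetL (k+1) h
      rw [e1, e2]
      exact hmain
  -- build the edge set
  set nn := M.length with hnn
  set EL : List Edge := List.ofFn (fun i : Fin (nn - 1) =>
    s(M.get ⟨i.val, by omega⟩, M.get ⟨i.val + 1, by have := i.isLt; omega⟩)) with hEL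
  set HP : Finset Edge := EL.toFinset with hHP
  have hELmem : ∀ e : Edge, e ∈ EL ↔ ∃ i : Fin (nn - 1),
      s(M.get ⟨i.val, by omega⟩, M.get ⟨i.val + 1, by have := i.isLt; omega⟩) = e := by
    intro e; rw [hEL]; exact List.mem_ofFn
  have hHPmem : ∀ e : Edge, e ∈ HP ↔ e ∈ EL := fun e => List.mem_toFinset
  have hgetne : ∀ (i j : Fin M.length), i ≠ j → M.get i ≠ M.get j := by
    intro i j hij heq
    exact hij (hMnodup.get_inj_iff.1 heq)
  have hELnodup : EL.Nodup := by
    rw [hEL]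
    rw [List.nodup_ofFn]
    intro i j hij
    rcases Sym2.eq_iff.1 hij with ⟨h1, h2⟩ | ⟨h1, h2⟩
    · have := hMnodup.get_inj_iff.1 h1
      exact Fin.ext (by simpa using congrArg Fin.val this)
    · have e1 := hMnodup.get_inj_iff.1 h1
      have e2 := hMnodup.get_inj_iff.1 h2
      have v1 : (i : ℕ) = (j : ℕ) + 1 := by simpa using congrArg Fin.val e1
      have v2 : (i : ℕ) + 1 = (j : ℕ) := by simpa using congrArg Fin.val e2
      omega
  have hHPhull : ∀ e ∈ HP, IsHullEdge P e := by
    intro e he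
    obtain ⟨i, hi⟩ := (hELmem e).1 ((hHPmem e).1 he)
    rw [← hi]
    exact hcons i.val (by have := i.isLt; omega)
  have hnpos : 0 < nn := by
    rw [hMlen]; exact Finset.card_pos.2 ⟨u, hu⟩
  refine ⟨HP, ⟨?_, ?_, ?_, ?_, ?_⟩, hHPhull⟩
  · intro e he p hp
    obtain ⟨i, hi⟩ := (hELmem e).1 ((hHPmem e).1 he)
    rw [← hi] at hp
    rcases Sym2.mem_iff.1 hp with rfl | rfl
    · exact hMgetP _
    · exact hMgetP _
  · intro e he
    obtain ⟨i, hi⟩ := (hELmem e).1 ((hHPmem e).1 he)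
    rw [← hi]
    intro hd
    have := Sym2.mk_isDiag_iff.1 hd
    exact hgetne _ _ (by intro hc; simpa using congrArg Fin.val hc) this
  · rw [hHP, List.toFinset_card_of_nodup hELnodup, hEL, List.length_ofFn, ← hMlen]
    omega
  · -- connectivity
    have hchain : ∀ k : ℕ, ∀ (hk : k < nn), Reach HP u (M.get ⟨k, hk⟩) := by
      intro k
      induction k with
      | zero => intro hk; rw [hMget0]; exact reach_refl _ _
      | succ k ihk =>
        intro hk
        have hk' : k < nn := by omega
        have hedge : s(M.get ⟨k, hk'⟩, M.get ⟨k+1, hk⟩) ∈ HP := by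
          rw [hHPmem, hELmem]
          exact ⟨⟨k, by omega⟩, rfl⟩
        exact reach_trans (ihk hk') (reach_single hedge)
    intro x hx y hy
    obtain ⟨kx, hkx⟩ := List.mem_iff_get.1 ((hMmem x).2 hx)
    obtain ⟨ky, hky⟩ := List.mem_iff_get.1 ((hMmem y).2 hy)
    have h1 : Reach HP u x := by rw [← hkx]; exact hchain kx.val kx.isLt
    have h2 : Reach HP u y := by rw [← hky]; exact hchain ky.val ky.isLt
    exact reach_trans (reach_symm h1) h2
  · intro e he f hf
    rcases eq_or_ne e f with rfl | hne
    · exact crosses_irrefl e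
    · have hhe := hHPhull e he
      have hhf := hHPhull f hf
      obtain ⟨u', v', hf', hu', hv', huv', _⟩ := hhf
      apply hull_edge_no_cross hhe
      · intro p hp
        rw [hf'] at hp
        rcases Sym2.mem_iff.1 hp with rfl | rfl
        · exact hu'
        · exact hv'
      · rw [hf']; exact fun hd => huv' (Sym2.mk_isDiag_iff.1 hd)

lemma flip_symm {P : Finset Point} {T T' : Finset Edge} {e f : Edge}
    (h : IsFlip P T T' e f) : IsFlip P T' T f e := by
  obtain ⟨h1, h2, he, hf, heq⟩ := h
  have hef : e ≠ f := fun hc => hf (hc ▸ he)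
  have h3 : T'.erase f = T.erase e := by
    rw [heq]
    apply Finset.erase_insert
    intro hmem
    exact hf (Finset.mem_of_mem_erase hmem)
  refine ⟨h2, h1, ?_, ?_, ?_⟩
  · rw [heq]; exact Finset.mem_insert_self _ _
  · rw [heq]
    intro hmem
    rcases Finset.mem_insert.1 hmem with hc | hc
    · exact hef hc
    · exact (Finset.notMem_erase e T) hc
  · rw [h3, Finset.insert_erase he]

lemma flipseq_reverse {P : Finset Point} {TI TF : Finset Edge} {k : ℕ} {S : ℕ → Finset Edge}
    (h : IsFlipSeqBtw P TI TF k S) : IsFlipSeqBtw P TF TI k (fun i => S (k - i)) := by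
  obtain ⟨⟨hpst, hflip⟩, h0, hk⟩ := h
  refine ⟨⟨fun i hi => hpst (k - i) (by omega), ?_⟩, by simp [hk], by simp [h0]⟩
  intro i hi
  obtain ⟨e, f, hef⟩ := hflip (k - i - 1) (by omega)
  have hsym := flip_symm hef
  show ∃ e f, IsFlip P (S (k - i)) (S (k - (i+1))) e f
  have h1 : k - i - 1 + 1 = k - i := by omega
  have h2 : k - (i + 1) = k - i - 1 := by omega
  rw [h2, ← h1]
  exact ⟨f, e, hsym⟩

lemma flipseq_concat {P : Finset Point} {A B C : Finset Edge} {k1 k2 : ℕ}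
    {S1 S2 : ℕ → Finset Edge} (h1 : IsFlipSeqBtw P A B k1 S1) (h2 : IsFlipSeqBtw P B C k2 S2) :
    IsFlipSeqBtw P A C (k1 + k2) (fun i => if i < k1 then S1 i else S2 (i - k1)) := by
  obtain ⟨⟨hpst1, hflip1⟩, h10, h1k⟩ := h1
  obtain ⟨⟨hpst2, hflip2⟩, h20, h2k⟩ := h2
  constructor; constructor
  · intro i hi
    by_cases hik : i < k1
    · simp only [hik, if_true]; exact hpst1 i (by omega)
    · simp only [hik, if_false]; exact hpst2 (i - k1) (by omega)
  · intro i hi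
    by_cases hik : i + 1 < k1
    · simp only [hik, if_true, show i < k1 by omega, if_true]
      exact hflip1 i (by omega)
    · by_cases hik2 : i < k1
      · -- i + 1 = k1
        have hieq : i + 1 = k1 := by omega
        simp only [hik, if_false, hik2, if_true]
        have : S2 (i + 1 - k1) = S1 (i+1) := by
          rw [hieq]; simp [h20, ← h1k]
        rw [this]
        exact hflip1 i (by omega)
      · simp only [hik, if_false, hik2, if_false]
        have e1 : i + 1 - k1 = (i - k1) + 1 := by omega
        rw [e1]
        exact hflip2 (i - k1) (by omega)
  constructor
  · by_cases h0 : 0 < k1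
    · simp [h0, h10]
    · have hk10 : k1 = 0 := by omega
      subst hk10
      simp only [Nat.lt_irrefl, if_false, Nat.sub_zero]
      rw [h20, ← h1k, h10]
  · have : ¬ (k1 + k2 < k1) := by omega
    simp only [this, if_false]
    simpa using h2k

/-- the canonical tree: from any PST we can flip to the hull tree -/
lemma to_hull_tree {P : Finset Point} {HP : Finset Edge} (hHP : IsPST P HP)
    (hHPhull : ∀ e ∈ HP, IsHullEdge P e) :
    ∀ j : ℕ, ∀ T : Finset Edge, IsPST P T → (HP \ T).card = j →
    ∃ S : ℕ → Finset Edge, IsFlipSeqBtw P T HP j S := by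
  intro j
  induction j with
  | zero =>
    intro T hT hcard
    have hsub : HP ⊆ T := by
      intro e he
      by_contra hne
      have : e ∈ HP \ T := Finset.mem_sdiff.2 ⟨he, hne⟩
      have := Finset.card_pos.2 ⟨e, this⟩
      omega
    have heq : T = HP := by
      apply (Finset.eq_of_subset_of_card_le hsub ?_).symm
      have := hT.card_eq
      have := hHP.card_eq
      omega
    refine ⟨fun _ => T, ⟨⟨fun i _ => hT, fun i hi => absurd hi (by omega)⟩, rfl, heq⟩⟩
  | succ j ihj =>
    intro T hT hcard
    have hne : (HP \ T).Nonempty := Finset.card_pos.1 (by omega)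
    obtain ⟨h, hmem⟩ := hne
    have hhHP : h ∈ HP := (Finset.mem_sdiff.1 hmem).1
    have hhT : h ∉ T := (Finset.mem_sdiff.1 hmem).2
    obtain ⟨a, b, hhrep, haP, hbP, hab, hside⟩ := hHPhull h hhHP
    have hhull : IsHullEdge P h := ⟨a, b, hhrep, haP, hbP, hab, hside⟩
    subst hhrep
    have hbridge : ¬ Reach (HP.erase s(a,b)) a b := pst_bridge hHP hhHP
    have hTcap : ¬ Reach (T ∩ HP.erase s(a,b)) a b := fun hr =>
      hbridge (reach_mono Finset.inter_subset_right hr)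
    have hreachT : Reach T a b := pst_reach hT haP hbP
    obtain ⟨g, hgT, hgH, hgbridge⟩ :=
      forest_sep (HP.erase s(a,b)) T.card T rfl (pst_forest hT) a b hreachT hTcap
    obtain ⟨⟨c, d⟩, rfl⟩ := Quot.exists_rep g
    have hgcd : s(c, d) ∈ T := hgT
    have hcP : c ∈ P := hT.endpoints_mem _ hgT c (by simp)
    have hdP : d ∈ P := hT.endpoints_mem _ hgT d (by simp)
    -- components
    have hacomp := pst_comp (d := d) hT hcP haP
    have hbcomp := pst_comp (d := d) hT hcP hbP
    set T' : Finset Edge := insert s(a,b) (T.erase s(c,d)) with hT'def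
    have hconn' : ∀ x ∈ P, ∀ z ∈ P, Reach T' x z := by
      rcases hacomp with hac | had
      · rcases hbcomp with hbc | hbd
        · exact absurd (reach_trans hac (reach_symm hbc)) hgbridge
        · exact pst_reconnect hT hgcd hcP hac hbd
      · rcases hbcomp with hbc | hbd
        · -- a ~ d, b ~ c : use swapped roles
          have hgdc : s(d, c) ∈ T := by rwa [Sym2.eq_swap]
          have herase : T.erase s(d,c) = T.erase s(c,d) := by rw [Sym2.eq_swap]
          have := pst_reconnect (a := a) (b := b) hT hgdc hdP
            (by rwa [herase]) (by rwa [herase])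
          rwa [herase] at this
        · exact absurd (reach_trans had (reach_symm hbd)) hgbridge
    have hT'pst : IsPST P T' := pst_swap hT hhull hhT hgT hconn'
    have hflip : IsFlip P T T' s(c,d) s(a,b) := ⟨hT, hT'pst, hgT, hhT, rfl⟩
    -- cardinality decrease
    have hgne : s(c,d) ≠ s(a,b) := fun hc => hhT (hc ▸ hgT)
    have hgHP : s(c,d) ∉ HP := by
      intro hc
      exact hgH (Finset.mem_erase.2 ⟨hgne, hc⟩)
    have hcard' : (HP \ T').card = j := by
      have hseteq : HP \ T' = (HP \ T).erase s(a,b) := by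
        ext x
        simp only [Finset.mem_sdiff, Finset.mem_erase, hT'def, Finset.mem_insert,
          Finset.mem_erase]
        constructor
        · rintro ⟨hx1, hx2⟩
          push_neg at hx2
          exact ⟨hx2.1, hx1, fun hxT => (hx2.2 (fun hxg => hgHP (hxg ▸ hx1))) hxT⟩
        · rintro ⟨hxab, hx1, hx2⟩
          refine ⟨hx1, ?_⟩
          push_neg
          exact ⟨hxab, fun hxg hxT => hx2 hxT⟩
      rw [hseteq, Finset.card_erase_of_mem hmem, hcard]
      omega
    obtain ⟨S, hS⟩ := ihj T' hT'pst hcard'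
    refine ⟨fun i => if i = 0 then T else S (i - 1), ?_⟩
    obtain ⟨⟨hSpst, hSflip⟩, hS0, hSk⟩ := hS
    constructor; constructor
    · intro i hi
      by_cases h0 : i = 0
      · simp [h0, hT]
      · simp only [h0, if_false]; exact hSpst (i-1) (by omega)
    · intro i hi
      by_cases h0 : i = 0
      · subst h0
        simp only [if_true, show (1:ℕ) ≠ 0 by omega, if_false]
        simpa [hS0] using ⟨_, _, hflip⟩
      · simp only [h0, if_false, show i + 1 ≠ 0 by omega, if_false]
        have e1 : i + 1 - 1 = (i - 1) + 1 := by omega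
        rw [e1]
        exact hSflip (i-1) (by omega)
    constructor
    · simp
    · simp only [show j + 1 ≠ 0 by omega, if_false]
      simpa using hSk

theorem flip_connect {P : Finset Point} (hP : ConvexPos P) {TI TF : Finset Edge}
    (hTI : IsPST P TI) (hTF : IsPST P TF) :
    ∃ k S, IsFlipSeqBtw P TI TF k S := by
  have hPne : P.Nonempty := by
    have := hTI.card_eq
    exact Finset.card_pos.1 (by omega)
  obtain ⟨HP, hHP, hHPhull⟩ := exists_hull_tree P hP hPne
  obtain ⟨S1, hS1⟩ := to_hull_tree hHP hHPhull (HP \ TI).card TI hTI rfl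
  obtain ⟨S2, hS2⟩ := to_hull_tree hHP hHPhull (HP \ TF).card TF hTF rfl
  exact ⟨_, _, flipseq_concat hS1 (flipseq_reverse hS2)⟩

/-- reconnecting across the two components -/
lemma conn_of_cross {P : Finset Point} {B : Finset Edge} {c d p q : Point}
    (hcomp : ∀ z ∈ P, Reach B z c ∨ Reach B z d)
    (hpc : Reach B p c) (hqd : Reach B q d) :
    ∀ z ∈ P, ∀ z' ∈ P, Reach (insert s(p,q) B) z z' := by
  have hsub : B ⊆ insert s(p,q) B := Finset.subset_insert _ _
  have hcd : Reach (insert s(p,q) B) c d := by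
    refine reach_trans (reach_symm (reach_mono hsub hpc)) ?_
    refine reach_trans (reach_single (Finset.mem_insert_self _ _)) ?_
    exact reach_mono hsub hqd
  have hkey : ∀ z ∈ P, Reach (insert s(p,q) B) z c := by
    intro z hz
    rcases hcomp z hz with h | h
    · exact reach_mono hsub h
    · exact reach_trans (reach_mono hsub h) (reach_symm hcd)
  intro z hz z' hz'
  exact reach_trans (hkey z hz) (reach_symm (hkey z' hz'))

/-- The main exchange lemma: if keeping `x` swapped for `e` stops working after
the flip that removes `r` and adds `f`, then we can swap `e` for `r` instead. -/
lemma gl {P : Finset Point} {T T2 : Finset Edge} {e x r f : Edge}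
    (hT : IsPST P T) (hT2 : IsPST P T2)
    (hT2eq : T2 = insert f (T.erase r))
    (hrT : r ∈ T) (hfT : f ∉ T)
    (heT : e ∉ T) (heT2 : e ∉ T2) (hxT : x ∈ T) (hxe : x ≠ e) (hxr : x ≠ r)
    (hT1 : IsPST P (insert e (T.erase x)))
    (hbad : ¬ ∀ p ∈ P, ∀ q ∈ P, Reach (insert e (T2.erase x)) p q) :
    ∀ p ∈ P, ∀ q ∈ P, Reach (insert e (T.erase r)) p q := by
  classical
  -- basic distinctness
  have hre : r ≠ e := fun hc => heT (hc ▸ hrT)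
  have hfe : f ≠ e := by
    intro hc
    apply heT2
    rw [hT2eq, ← hc]
    exact Finset.mem_insert_self _ _
  have hxf : x ≠ f := fun hc => hfT (hc ▸ hxT)
  have hrf : r ≠ f := fun hc => hfT (hc ▸ hrT)
  -- the common core W
  set W : Finset Edge := (T.erase x).erase r with hW
  have hxW : x ∉ W := by
    intro h
    exact (Finset.notMem_erase x T) (Finset.mem_of_mem_erase h)
  have hrW : r ∉ W := Finset.notMem_erase _ _
  have heW : e ∉ W := fun h => heT (Finset.mem_of_mem_erase (Finset.mem_of_mem_erase h))
  have hfW : f ∉ W := fun h => hfT (Finset.mem_of_mem_erase (Finset.mem_of_mem_erase h))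
  set B : Finset Edge := insert e W with hB
  have hrB : r ∉ B := by
    intro h
    rcases Finset.mem_insert.1 h with hc | hc
    · exact hre hc
    · exact hrW hc
  have hxB : x ∉ B := by
    intro h
    rcases Finset.mem_insert.1 h with hc | hc
    · exact hxe hc
    · exact hxW hc
  have hfB : f ∉ B := by
    intro h
    rcases Finset.mem_insert.1 h with hc | hc
    · exact hfe hc
    · exact hfW hc
  have hrTx : r ∈ T.erase x := Finset.mem_erase.2 ⟨fun hc => hxr hc.symm, hrT⟩
  have hxTr : x ∈ T.erase r := Finset.mem_erase.2 ⟨hxr, hxT⟩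
  have h1 : insert r W = T.erase x := by rw [hW]; exact Finset.insert_erase hrTx
  have hW' : W = (T.erase r).erase x := by rw [hW, Finset.erase_right_comm]
  have h2 : insert x W = T.erase r := by rw [hW']; exact Finset.insert_erase hxTr
  have hT1eq : insert e (T.erase x) = insert r B := by
    rw [hB, ← h1, Finset.insert_comm]
  have hT2x : insert e (T2.erase x) = insert f B := by
    rw [hT2eq]
    have h3 : (insert f (T.erase r)).erase x = insert f W := by
      rw [Finset.erase_insert_of_ne (Ne.symm hxf), ← hW']
    rw [h3, hB, Finset.insert_comm]
  have hgoal_eq : insert e (T.erase r) = insert x B := by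
    rw [hB, ← h2, Finset.insert_comm]
  have hT2W : T2 = insert f (insert x W) := by rw [hT2eq, h2]
  -- representation of r
  obtain ⟨⟨c, d⟩, rfl⟩ := Quot.exists_rep r
  have hcP : c ∈ P := hT.endpoints_mem _ hrT c (by simp)
  have hdP : d ∈ P := hT.endpoints_mem _ hrT d (by simp)
  -- bridge in T1
  have hrT1 : s(c,d) ∈ insert e (T.erase x) := by
    rw [hT1eq]; exact Finset.mem_insert_self _ _
  have hbridge0 := pst_bridge hT1 hrT1
  have herase1 : (insert e (T.erase x)).erase s(c,d) = B := by
    rw [hT1eq]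
    exact Finset.erase_insert hrB
  rw [herase1] at hbridge0
  -- components of B
  have hcomp : ∀ z ∈ P, Reach B z c ∨ Reach B z d := by
    intro z hz
    have := pst_comp (d := d) hT1 hcP hz
    rwa [herase1] at this
  -- endpoints of x and f
  obtain ⟨⟨p1, q1⟩, hxrep⟩ := Quot.exists_rep x
  obtain ⟨⟨p2, q2⟩, hfrep⟩ := Quot.exists_rep f
  have hp1P : p1 ∈ P := hT.endpoints_mem _ hxT p1 (by rw [← hxrep]; simp)
  have hq1P : q1 ∈ P := hT.endpoints_mem _ hxT q1 (by rw [← hxrep]; simp)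
  have hfT2 : f ∈ T2 := by rw [hT2eq]; exact Finset.mem_insert_self _ _
  have hp2P : p2 ∈ P := hT2.endpoints_mem _ hfT2 p2 (by rw [← hfrep]; simp)
  have hq2P : q2 ∈ P := hT2.endpoints_mem _ hfT2 q2 (by rw [← hfrep]; simp)
  -- f's endpoints lie in the same component
  have hsamef : (Reach B p2 c ∧ Reach B q2 c) ∨ (Reach B p2 d ∧ Reach B q2 d) := by
    have hnotcross1 : ¬ (Reach B p2 c ∧ Reach B q2 d) := by
      rintro ⟨h1, h2⟩
      apply hbad
      rw [hT2x, ← hfrep]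
      exact conn_of_cross hcomp h1 h2
    have hnotcross2 : ¬ (Reach B p2 d ∧ Reach B q2 c) := by
      rintro ⟨h1, h2⟩
      apply hbad
      rw [hT2x, ← hfrep]
      intro z hz z' hz'
      have : Reach (insert s(q2,p2) B) z z' := conn_of_cross hcomp h2 h1 z hz z' hz'
      rwa [Sym2.eq_swap] at this
    rcases hcomp p2 hp2P with h1 | h1 <;> rcases hcomp q2 hq2P with h2 | h2
    · exact Or.inl ⟨h1, h2⟩
    · exact absurd ⟨h1, h2⟩ hnotcross1
    · exact absurd ⟨h1, h2⟩ hnotcross2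
    · exact Or.inr ⟨h1, h2⟩
  -- x's endpoints must lie in different components
  rcases hcomp p1 hp1P with h1 | h1 <;> rcases hcomp q1 hq1P with h2 | h2
  · -- both in c's component: contradiction with connectivity of T2
    exfalso
    have hclass : ∀ z z', Reach T2 z z' → (Reach B z c → Reach B z' c) := by
      intro z z' hzz'
      induction hzz' with
      | refl => exact id
      | @tail y y' hyy' hstep ih =>
        intro hzc
        have hyc := ih hzc
        have hstep' : s(y, y') ∈ insert f (insert x W) := by rwa [← hT2W]
        rcases Finset.mem_insert.1 hstep' with hc | hc
        · -- the step is f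
          rw [← hfrep] at hc
          rcases Sym2.eq_iff.1 hc with ⟨rfl, rfl⟩ | ⟨rfl, rfl⟩
          · rcases hsamef with ⟨ha, hb⟩ | ⟨ha, hb⟩
            · exact hb
            · exact absurd (reach_trans (reach_symm hyc) ha) hbridge0
          · rcases hsamef with ⟨ha, hb⟩ | ⟨ha, hb⟩
            · exact ha
            · exact absurd (reach_trans (reach_symm hyc) hb) hbridge0
        · rcases Finset.mem_insert.1 hc with hc' | hc'
          · -- the step is x
            rw [← hxrep] at hc'
            rcases Sym2.eq_iff.1 hc' with ⟨rfl, rfl⟩ | ⟨rfl, rfl⟩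
            · exact h2
            · exact h1
          · -- the step is in W ⊆ B
            have hBmem : s(y,y') ∈ B := Finset.mem_insert_of_mem hc'
            exact reach_trans (reach_symm (reach_single hBmem)) hyc
    have hT2cd : Reach T2 c d := pst_reach hT2 hcP hdP
    exact hbridge0 (reach_symm (hclass c d hT2cd (reach_refl _ _)))
  · -- p1 ~ c, q1 ~ d : cross, goal follows
    rw [hgoal_eq, ← hxrep]
    exact conn_of_cross hcomp h1 h2
  · -- p1 ~ d, q1 ~ c
    rw [hgoal_eq, ← hxrep]
    intro z hz z' hz'
    have : Reach (insert s(q1,p1) B) z z' := conn_of_cross hcomp h2 h1 z hz z' hz'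
    rwa [Sym2.eq_swap] at this
  · -- both in d's component: contradiction
    exfalso
    have hclass : ∀ z z', Reach T2 z z' → (Reach B z c → Reach B z' c) := by
      intro z z' hzz'
      induction hzz' with
      | refl => exact id
      | @tail y y' hyy' hstep ih =>
        intro hzc
        have hyc := ih hzc
        have hstep' : s(y, y') ∈ insert f (insert x W) := by rwa [← hT2W]
        rcases Finset.mem_insert.1 hstep' with hc | hc
        · rw [← hfrep] at hc
          rcases Sym2.eq_iff.1 hc with ⟨rfl, rfl⟩ | ⟨rfl, rfl⟩
          · rcases hsamef with ⟨ha, hb⟩ | ⟨ha, hb⟩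
            · exact hb
            · exact absurd (reach_trans (reach_symm hyc) ha) hbridge0
          · rcases hsamef with ⟨ha, hb⟩ | ⟨ha, hb⟩
            · exact ha
            · exact absurd (reach_trans (reach_symm hyc) hb) hbridge0
        · rcases Finset.mem_insert.1 hc with hc' | hc'
          · rw [← hxrep] at hc'
            rcases Sym2.eq_iff.1 hc' with ⟨rfl, rfl⟩ | ⟨rfl, rfl⟩
            · exact absurd (reach_trans (reach_symm hyc) h1) hbridge0
            · exact absurd (reach_trans (reach_symm hyc) h2) hbridge0
          · have hBmem : s(y,y') ∈ B := Finset.mem_insert_of_mem hc'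
            exact reach_trans (reach_symm (reach_single hBmem)) hyc
    have hT2cd : Reach T2 c d := pst_reach hT2 hcP hdP
    exact hbridge0 (reach_symm (hclass c d hT2cd (reach_refl _ _)))

lemma flip_back {T T' : Finset Edge} {a b : Edge} (hT'eq : T' = insert b (T.erase a))
    (ha : a ∈ T) (hb : b ∉ T) : T'.erase b = T.erase a := by
  rw [hT'eq]
  exact Finset.erase_insert (fun h => hb (Finset.mem_of_mem_erase h))

lemma idA {S : Finset Edge} {e x E F : Edge} (hES : E ∈ S) (hxS : x ∈ S) (heS : e ∉ S)
    (hFS : F ∉ S) (hxE : x ≠ E) :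
    insert e ((insert F (S.erase E)).erase x) = insert F ((insert e (S.erase x)).erase E) := by
  have hxF : x ≠ F := fun hc => hFS (hc ▸ hxS)
  have heE : e ≠ E := fun hc => heS (hc ▸ hES)
  rw [Finset.erase_insert_of_ne (Ne.symm hxF)]
  rw [Finset.erase_insert_of_ne heE]
  rw [Finset.erase_right_comm]
  rw [Finset.insert_comm]

lemma idB {S : Finset Edge} {e x E : Edge} (hES : E ∈ S) (hxS : x ∈ S) (hxE : x ≠ E)
    (heE : e ≠ E) :
    insert x ((insert e (S.erase x)).erase E) = insert e (S.erase E) := by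
  rw [Finset.erase_insert_of_ne heE, Finset.erase_right_comm, Finset.insert_comm]
  congr 1
  exact Finset.insert_erase (Finset.mem_erase.2 ⟨hxE, hxS⟩)

lemma idC {S : Finset Edge} {e F : Edge} (heS : e ∈ S) (hFS : F ∉ S) :
    insert e ((insert F (S.erase e)).erase F) = S := by
  rw [Finset.erase_insert (fun h => hFS (Finset.mem_of_mem_erase h)), Finset.insert_erase heS]

-- ===== the shortening construction =====

lemma shorten {P : Finset Point} {TI TF : Finset Edge} {k : ℕ} {S : ℕ → Finset Edge} {e : Edge}
    (hseq : IsFlipSeqBtw P TI TF k S) (hhull : IsHullEdge P e)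
    {i m : ℕ} (him : i < m) (hmk : m < k)
    (hnot : ∀ t, i < t → t ≤ m → e ∉ S t) (hei : e ∈ S i) (hem : e ∈ S (m+1)) :
    ∃ S' : ℕ → Finset Edge, (∀ r ≤ k - 1, IsPST P (S' r)) ∧
      (∀ r < k - 1, S' r = S' (r+1) ∨ ∃ a b, IsFlip P (S' r) (S' (r+1)) a b) ∧
      S' 0 = TI ∧ S' (k-1) = TF := by
  classical
  obtain ⟨⟨hpst, hflip⟩, h0, hk⟩ := hseq
  -- choose flip data
  have hEFex : ∀ t, ∃ ab : Edge × Edge, t < k → IsFlip P (S t) (S (t+1)) ab.1 ab.2 := by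
    intro t
    by_cases h : t < k
    · obtain ⟨a, b, hab⟩ := hflip t h
      exact ⟨(a, b), fun _ => hab⟩
    · exact ⟨(s(((0,0) : Point), ((0,0) : Point)), s(((0,0) : Point), ((0,0) : Point))),
        fun hc => absurd hc h⟩
  choose EF hEF using hEFex
  set E : ℕ → Edge := fun t => (EF t).1 with hEdef
  set F : ℕ → Edge := fun t => (EF t).2 with hFdef
  have hfl : ∀ t, t < k → IsFlip P (S t) (S (t+1)) (E t) (F t) := fun t ht => hEF t ht
  have hSeq : ∀ t, t < k → S (t+1) = insert (F t) ((S t).erase (E t)) :=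
    fun t ht => (hfl t ht).2.2.2.2
  have hEmem : ∀ t, t < k → E t ∈ S t := fun t ht => (hfl t ht).2.2.1
  have hFnmem : ∀ t, t < k → F t ∉ S t := fun t ht => (hfl t ht).2.2.2.1
  have hFmem : ∀ t, t < k → F t ∈ S (t+1) := fun t ht => by
    rw [hSeq t ht]; exact Finset.mem_insert_self _ _
  have hEnmem : ∀ t, t < k → E t ∉ S (t+1) := by
    intro t ht hc
    rw [hSeq t ht] at hc
    rcases Finset.mem_insert.1 hc with hc' | hc'
    · exact hFnmem t ht (hc' ▸ hEmem t ht)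
    · exact (Finset.notMem_erase _ _) hc'
  have hik : i < k := by omega
  -- E i = e
  have hEi : E i = e := by
    by_contra hne
    have : e ∈ S (i+1) := by
      rw [hSeq i hik]
      exact Finset.mem_insert_of_mem (Finset.mem_erase.2 ⟨fun hc => hne hc.symm, hei⟩)
    exact hnot (i+1) (by omega) (by omega) this
  -- F m = e
  have hFm : F m = e := by
    have := hem
    rw [hSeq m hmk] at this
    rcases Finset.mem_insert.1 this with hc | hc
    · exact hc.symm
    · exact absurd (Finset.mem_of_mem_erase hc) (hnot m (by omega) (by omega))
  -- the moving edge x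
  set go : ℕ → Edge := fun n => Nat.rec (F i)
    (fun n prev => if (prev ∈ S (i+1+n+1) ∧ ∀ p ∈ P, ∀ q ∈ P,
      Reach (insert e ((S (i+1+n+1)).erase prev)) p q) then prev else F (i+1+n)) n with hgo
  set x : ℕ → Edge := fun t => go (t - (i+1)) with hxdef
  have hx0 : x (i+1) = F i := by
    show go ((i+1) - (i+1)) = F i
    rw [Nat.sub_self]
    rfl
  have hxstep : ∀ t, i+1 ≤ t → x (t+1) = if (x t ∈ S (t+1) ∧ ∀ p ∈ P, ∀ q ∈ P,
      Reach (insert e ((S (t+1)).erase (x t))) p q) then x t else F t := by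
    intro t ht
    have e1 : t + 1 - (i+1) = (t - (i+1)) + 1 := by omega
    show go (t + 1 - (i+1)) = _
    rw [e1]
    show (if (go (t - (i+1)) ∈ S (i+1+(t - (i+1))+1) ∧ ∀ p ∈ P, ∀ q ∈ P,
      Reach (insert e ((S (i+1+(t - (i+1))+1)).erase (go (t - (i+1))))) p q)
      then go (t - (i+1)) else F (i+1+(t - (i+1)))) = _
    rw [show i+1+(t - (i+1))+1 = t + 1 by omega, show i+1+(t - (i+1)) = t by omega]
  have hTti1 : insert e ((S (i+1)).erase (x (i+1))) = S i := by
    rw [hx0, hSeq i hik, hEi]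
    exact idC hei (hFnmem i hik)
  -- the invariant
  have hinv : ∀ t, i+1 ≤ t → t ≤ m →
      x t ∈ S t ∧ x t ≠ e ∧
        (∀ p ∈ P, ∀ q ∈ P, Reach (insert e ((S t).erase (x t))) p q) := by
    intro t ht
    induction t, ht using Nat.le_induction with
    | base =>
      intro _
      refine ⟨hx0 ▸ hFmem i hik, ?_, ?_⟩
      · rw [hx0]; intro hc; exact hFnmem i hik (hc ▸ hei)
      · rw [hTti1]
        exact fun p hp q hq => pst_reach (hpst i (by omega)) hp hq
    | succ t ht ih =>
      intro ht1
      have htm : t ≤ m := by omega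
      have htk : t < k := by omega
      obtain ⟨hxS, hxe, hconn⟩ := ih htm
      have heSt : e ∉ S t := hnot t (by omega) htm
      have heSt1 : e ∉ S (t+1) := hnot (t+1) (by omega) ht1
      have hxs := hxstep t ht
      have hFe : F t ≠ e := fun hc => heSt1 (hc ▸ hFmem t htk)
      by_cases hC : (x t ∈ S (t+1) ∧ ∀ p ∈ P, ∀ q ∈ P,
          Reach (insert e ((S (t+1)).erase (x t))) p q)
      · rw [if_pos hC] at hxs
        rw [hxs]
        exact ⟨hC.1, hxe, hC.2⟩
      · rw [if_neg hC] at hxs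
        rw [hxs]
        refine ⟨hFmem t htk, hFe, ?_⟩
        have herw : (S (t+1)).erase (F t) = (S t).erase (E t) :=
          flip_back (hSeq t htk) (hEmem t htk) (hFnmem t htk)
        rw [herw]
        by_cases hxE : x t = E t
        · rw [← hxE]
          exact hconn
        · have hxSt1 : x t ∈ S (t+1) := by
            rw [hSeq t htk]
            exact Finset.mem_insert_of_mem (Finset.mem_erase.2 ⟨hxE, hxS⟩)
          have hbad : ¬ ∀ p ∈ P, ∀ q ∈ P, Reach (insert e ((S (t+1)).erase (x t))) p q :=
            fun hcc => hC ⟨hxSt1, hcc⟩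
          exact gl (hpst t (by omega)) (hpst (t+1) (by omega)) (hSeq t htk)
            (hEmem t htk) (hFnmem t htk) heSt heSt1 hxS hxe hxE
            (pst_swap (hpst t (by omega)) hhull heSt hxS hconn) hbad
  -- PSTness of the replaced trees
  have hTtpst : ∀ t, i+1 ≤ t → t ≤ m → IsPST P (insert e ((S t).erase (x t))) := by
    intro t ht htm
    obtain ⟨hxS, hxe, hconn⟩ := hinv t ht htm
    exact pst_swap (hpst t (by omega)) hhull (hnot t (by omega) htm) hxS hconn
  -- the step transitions
  have hstepflip : ∀ t, i+1 ≤ t → t+1 ≤ m →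
      insert e ((S t).erase (x t)) = insert e ((S (t+1)).erase (x (t+1))) ∨
      ∃ a b, IsFlip P (insert e ((S t).erase (x t)))
        (insert e ((S (t+1)).erase (x (t+1)))) a b := by
    intro t ht ht1
    have htm : t ≤ m := by omega
    have htk : t < k := by omega
    obtain ⟨hxS, hxe, hconn⟩ := hinv t ht htm
    have heSt : e ∉ S t := hnot t (by omega) htm
    have heSt1 : e ∉ S (t+1) := hnot (t+1) (by omega) ht1
    have hxs := hxstep t ht
    have hFe : F t ≠ e := fun hc => heSt1 (hc ▸ hFmem t htk)
    have hEe : E t ≠ e := fun hc => heSt (hc ▸ hEmem t htk)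
    by_cases hC : (x t ∈ S (t+1) ∧ ∀ p ∈ P, ∀ q ∈ P,
        Reach (insert e ((S (t+1)).erase (x t))) p q)
    · rw [if_pos hC] at hxs
      right
      have hxE : x t ≠ E t := by
        intro hc
        exact hEnmem t htk (hc ▸ hC.1)
      refine ⟨E t, F t, hTtpst t ht htm, hTtpst (t+1) (by omega) ht1, ?_, ?_, ?_⟩
      · exact Finset.mem_insert_of_mem
          (Finset.mem_erase.2 ⟨fun hc => hxE hc.symm, hEmem t htk⟩)
      · intro hc
        rcases Finset.mem_insert.1 hc with hc' | hc'
        · exact hFe hc'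
        · exact hFnmem t htk (Finset.mem_of_mem_erase hc')
      · rw [hxs, hSeq t htk]
        exact idA (hEmem t htk) hxS heSt (hFnmem t htk) hxE
    · rw [if_neg hC] at hxs
      have herw : (S (t+1)).erase (F t) = (S t).erase (E t) :=
        flip_back (hSeq t htk) (hEmem t htk) (hFnmem t htk)
      by_cases hxE : x t = E t
      · left
        rw [hxs, herw, hxE]
      · right
        refine ⟨E t, x t, hTtpst t ht htm, hTtpst (t+1) (by omega) ht1, ?_, ?_, ?_⟩
        · exact Finset.mem_insert_of_mem
            (Finset.mem_erase.2 ⟨fun hc => hxE hc.symm, hEmem t htk⟩)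
        · intro hc
          rcases Finset.mem_insert.1 hc with hc' | hc'
          · exact hxe hc'
          · exact (Finset.notMem_erase _ _) hc'
        · rw [hxs, herw]
          exact (idB (hEmem t htk) hxS hxE (Ne.symm hEe)).symm
  -- final transition
  have hfinal : insert e ((S m).erase (x m)) = S (m+1) ∨
      ∃ a b, IsFlip P (insert e ((S m).erase (x m))) (S (m+1)) a b := by
    have hmm : i + 1 ≤ m := by omega
    obtain ⟨hxS, hxe, hconn⟩ := hinv m hmm (le_refl m)
    have heSm : e ∉ S m := hnot m (by omega) (le_refl m)
    have hEe : E m ≠ e := fun hc => heSm (hc ▸ hEmem m hmk)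
    have hSm1 : S (m+1) = insert e ((S m).erase (E m)) := by
      rw [hSeq m hmk, hFm]
    by_cases hxE : x m = E m
    · left
      rw [hSm1, hxE]
    · right
      refine ⟨E m, x m, hTtpst m hmm (le_refl m), hpst (m+1) (by omega), ?_, ?_, ?_⟩
      · exact Finset.mem_insert_of_mem
          (Finset.mem_erase.2 ⟨fun hc => hxE hc.symm, hEmem m hmk⟩)
      · intro hc
        rcases Finset.mem_insert.1 hc with hc' | hc'
        · exact hxe hc'
        · exact (Finset.notMem_erase _ _) hc'
      · rw [hSm1]
        exact (idB (hEmem m hmk) hxS hxE (Ne.symm hEe)).symm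
  -- assemble the weak sequence
  refine ⟨fun r => if r ≤ i then S r else if r < m then insert e ((S (r+1)).erase (x (r+1)))
    else S (r+1), ?_, ?_, ?_, ?_⟩
  · intro r hr
    by_cases h1 : r ≤ i
    · simp only [h1, if_true]; exact hpst r (by omega)
    · by_cases h2 : r < m
      · simp only [h1, if_false, h2, if_true]
        exact hTtpst (r+1) (by omega) (by omega)
      · simp only [h1, if_false, h2, if_false]
        exact hpst (r+1) (by omega)
  · intro r hr
    by_cases h1 : r + 1 ≤ i
    · simp only [show r ≤ i by omega, if_true, h1, if_true]
      exact Or.inr ⟨E r, F r, hfl r (by omega)⟩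
    · by_cases h2 : r ≤ i
      · have hri : r = i := by omega
        subst hri
        simp only [h2, if_true, h1, if_false]
        by_cases h3 : r + 1 < m
        · simp only [h3, if_true]
          have := hstepflip (r+1) (by omega) (by omega)
          rwa [hTti1] at this
        · have hrm : r + 1 = m := by omega
          simp only [h3, if_false]
          have := hfinal
          rw [← hrm] at this
          rwa [hTti1] at this
      · simp only [h2, if_false, h1, if_false]
        by_cases h3 : r < m
        · by_cases h4 : r + 1 < m
          · simp only [h3, if_true, h4, if_true]
            exact hstepflip (r+1) (by omega) (by omega)
          · have hrm : r + 1 = m := by omega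
            simp only [h3, if_true, h4, if_false]
            have := hfinal
            rw [← hrm] at this
            exact this
        · simp only [h3, if_false, show ¬ (r + 1 < m) by omega, if_false]
          exact Or.inr ⟨E (r+1), F (r+1), hfl (r+1) (by omega)⟩
  · simp only [Nat.zero_le, if_true, h0]
  · have h1 : ¬ (k - 1 ≤ i) := by omega
    have h2 : ¬ (k - 1 < m) := by omega
    simp only [h1, if_false, h2, if_false]
    rw [show k - 1 + 1 = k by omega, hk]

-- ===== compression of weak sequences =====

lemma compress {P : Finset Point} : ∀ n : ℕ, ∀ S : ℕ → Finset Edge,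
    (∀ i ≤ n, IsPST P (S i)) →
    (∀ i < n, S i = S (i+1) ∨ ∃ a b, IsFlip P (S i) (S (i+1)) a b) →
    ∃ n' ≤ n, ∃ S', IsFlipSeqBtw P (S 0) (S n) n' S' := by
  intro n
  induction n with
  | zero =>
    intro S h _
    exact ⟨0, le_refl 0, S, ⟨⟨fun i hi => h i hi, fun i hi => absurd hi (by omega)⟩, rfl, rfl⟩⟩
  | succ n ihn =>
    intro S hpst hstep
    obtain ⟨n', hn', S', hS'⟩ := ihn (fun j => S (j+1))
      (fun i hi => hpst (i+1) (by omega)) (fun i hi => hstep (i+1) (by omega))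
    rcases hstep 0 (by omega) with heq | hflip0
    · refine ⟨n', by omega, S', ?_⟩
      rw [heq]
      exact hS'
    · obtain ⟨⟨hp, hf⟩, hS'0, hS'k⟩ := hS'
      refine ⟨n'+1, by omega, fun j => if j = 0 then S 0 else S' (j-1), ⟨⟨?_, ?_⟩, by simp, ?_⟩⟩
      · intro j hj
        by_cases h0 : j = 0
        · simp only [h0, if_true]; exact hpst 0 (by omega)
        · simp only [h0, if_false]; exact hp (j-1) (by omega)
      · intro j hj
        by_cases h0 : j = 0
        · subst h0
          simp only [if_true, show (1:ℕ) ≠ 0 by omega, if_false]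
          simp only [Nat.sub_self]
          rw [hS'0]
          exact hflip0
        · simp only [h0, if_false, show j + 1 ≠ 0 by omega, if_false]
          rw [show j + 1 - 1 = (j - 1) + 1 by omega]
          exact hf (j-1) (by omega)
      · simp only [show n' + 1 ≠ 0 by omega, if_false, Nat.add_sub_cancel]
        exact hS'k

-- ===== the main theorem =====


/-- There exists a shortest flip sequence in which every convex hull edge is
flipped (i.e. occurs as the removed edge of a flip) at most once. -/
theorem stmt_1 (P : Finset Point) (hP : ConvexPos P) (TI TF : Finset Edge)
    (hTI : IsPST P TI) (hTF : IsPST P TF) :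
    ∃ (k : ℕ) (S : ℕ → Finset Edge), IsShortest P TI TF k S ∧
      ∀ e : Edge, IsHullEdge P e → removedCount e k S ≤ 1 := by
  classical
  have hne : {k : ℕ | ∃ S : ℕ → Finset Edge, IsFlipSeqBtw P TI TF k S}.Nonempty := by
    obtain ⟨k, S, h⟩ := flip_connect hP hTI hTF
    exact ⟨k, S, h⟩
  have hmem : ∃ S : ℕ → Finset Edge, IsFlipSeqBtw P TI TF (flipDist P TI TF) S :=
    Nat.sInf_mem hne
  obtain ⟨S, hS⟩ := hmem
  set k := flipDist P TI TF with hkdef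
  refine ⟨k, S, ⟨hS, rfl⟩, ?_⟩
  intro e hhull
  by_contra hcnt
  push_neg at hcnt
  have h2le : 2 ≤ ((Finset.range k).filter fun t => e ∈ S t ∧ e ∉ S (t+1)).card := by
    have : 1 < removedCount e k S := hcnt
    unfold removedCount at this
    omega
  obtain ⟨a, ha, b, hb, hab⟩ := Finset.one_lt_card.1 (by omega :
    1 < ((Finset.range k).filter fun t => e ∈ S t ∧ e ∉ S (t+1)).card)
  -- order them
  set i := min a b with hidef
  set i' := max a b with hi'def
  have hii' : i < i' := by
    rcases Nat.lt_or_ge a b with h | h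
    · rw [hidef, hi'def, min_eq_left (le_of_lt h), max_eq_right (le_of_lt h)]; exact h
    · have : b < a := by omega
      rw [hidef, hi'def, min_eq_right (le_of_lt this), max_eq_left (le_of_lt this)]; exact this
  have hifil : i ∈ (Finset.range k).filter fun t => e ∈ S t ∧ e ∉ S (t+1) := by
    rcases Nat.lt_or_ge a b with h | h
    · rw [hidef, min_eq_left (le_of_lt h)]; exact ha
    · rcases Nat.eq_or_lt_of_le h with h' | h'
      · omega
      · rw [hidef, min_eq_right (le_of_lt h')]; exact hb
  have hi'fil : i' ∈ (Finset.range k).filter fun t => e ∈ S t ∧ e ∉ S (t+1) := by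
    rcases Nat.lt_or_ge a b with h | h
    · rw [hi'def, max_eq_right (le_of_lt h)]; exact hb
    · rcases Nat.eq_or_lt_of_le h with h' | h'
      · omega
      · rw [hi'def, max_eq_left (le_of_lt h')]; exact ha
  have hik : i < k := Finset.mem_range.1 (Finset.mem_filter.1 hifil).1
  have hi'k : i' < k := Finset.mem_range.1 (Finset.mem_filter.1 hi'fil).1
  have hei : e ∈ S i := (Finset.mem_filter.1 hifil).2.1
  have hei1 : e ∉ S (i+1) := (Finset.mem_filter.1 hifil).2.2
  have hei' : e ∈ S i' := (Finset.mem_filter.1 hi'fil).2.1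
  have hii'2 : i + 2 ≤ i' := by
    rcases Nat.eq_or_lt_of_le (by omega : i + 1 ≤ i') with h | h
    · exfalso; apply hei1; rw [h]; exact hei'
    · omega
  -- find the first re-insertion
  have hexm : ∃ t, i < t ∧ e ∈ S (t+1) := by
    refine ⟨i' - 1, by omega, ?_⟩
    rw [show i' - 1 + 1 = i' by omega]
    exact hei'
  set m := Nat.find hexm with hm
  obtain ⟨him, hem⟩ := Nat.find_spec hexm
  have hmk : m < k := by
    have : m ≤ i' - 1 := Nat.find_le ⟨by omega, by rw [show i' - 1 + 1 = i' by omega]; exact hei'⟩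
    omega
  have hnot : ∀ t, i < t → t ≤ m → e ∉ S t := by
    intro t ht1 ht2 hmem'
    rcases Nat.eq_or_lt_of_le (by omega : i + 1 ≤ t) with h | h
    · rw [← h] at hmem'; exact hei1 hmem'
    · have : t - 1 < m := by omega
      exact Nat.find_min hexm this ⟨by omega, by rw [show t - 1 + 1 = t by omega]; exact hmem'⟩
  obtain ⟨S', hS'pst, hS'step, hS'0, hS'k⟩ := shorten ⟨hS.1, hS.2.1, hS.2.2⟩ hhull him hmk hnot hei hem
  obtain ⟨k', hk', S'', hS''⟩ := compress (P := P) (k-1) S' hS'pst hS'step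
  rw [hS'0, hS'k] at hS''
  have hk'mem : k' ∈ {k : ℕ | ∃ S : ℕ → Finset Edge, IsFlipSeqBtw P TI TF k S} := ⟨S'', hS''⟩
  have hfin : k ≤ k' := Nat.sInf_le hk'mem
  omega
end

section
/- Let T_I ≠ T_F be plane spanning trees of a finite point set P in convex position such that every edge of T_F ∖ T_I is crossed by at least two edges of T_I. Then in every flip sequence from T_I to T_F, the first flip inserts an edge not belonging to T_F, i.e., the first flip is a parking flip. -/
open scoped Classical

theorem IsFlip.eq_of_crosses {P : Finset Point} {T T' : Finset Edge} {e f g h : Edge}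
    (hflip : IsFlip P T T' e f) (hg : g ∈ T) (hh : h ∈ T') (hgh : Crosses g h) : g = e := by
  obtain ⟨-, hT', -, -, rfl⟩ := hflip
  by_contra hge
  exact hT'.noncrossing g (Finset.mem_insert_of_mem (Finset.mem_erase.mpr ⟨hge, hg⟩)) h hh hgh

theorem stmt_12_general (P : Finset Point) (TI TF : Finset Edge)
    (hcross : ∀ f ∈ TF, f ∉ TI →
      ∃ e1 ∈ TI, ∃ e2 ∈ TI, e1 ≠ e2 ∧ Crosses e1 f ∧ Crosses e2 f) :
    ∀ (k : ℕ) (S : ℕ → Finset Edge), IsFlipSeqBtw P TI TF k S → 0 < k →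
      ∀ f : Edge, f ∈ S 1 → f ∉ S 0 → f ∉ TF := by
  rintro k S ⟨⟨-, hflips⟩, rfl, rfl⟩ hk f hf1 hf0 hfTF
  obtain ⟨e, _, hflip⟩ := hflips 0 hk
  obtain ⟨e1, he1, e2, he2, hne, hc1, hc2⟩ := hcross f hfTF hf0
  exact hne ((hflip.eq_of_crosses he1 hf1 hc1).trans (hflip.eq_of_crosses he2 hf1 hc2).symm)

/-- If every edge of `TF \ TI` is crossed by at least two edges of `TI`, then
in every flip sequence from `TI` to `TF` the first flip inserts an edge not in
`TF`, i.e. the first flip is a parking flip. -/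
theorem stmt_12 (P : Finset Point) (hP : ConvexPos P) (TI TF : Finset Edge)
    (hTI : IsPST P TI) (hTF : IsPST P TF) (hne : TI ≠ TF)
    (hcross : ∀ f ∈ TF, f ∉ TI →
      ∃ e1 ∈ TI, ∃ e2 ∈ TI, e1 ≠ e2 ∧ Crosses e1 f ∧ Crosses e2 f) :
    ∀ (k : ℕ) (S : ℕ → Finset Edge), IsFlipSeqBtw P TI TF k S → 0 < k →
      ∀ f : Edge, f ∈ S 1 → f ∉ S 0 → f ∉ TF :=
  stmt_12_general P TI TF hcross
end

section
/- Let S = T_0, T_1, …, T_k be a flip sequence between plane spanning trees of a finite point set P in convex position, and suppose an edge s = ab belongs to every tree T_i of the sequence. Let A be the set of points of P lying on the closed side of the line through a and b that appear in clockwise order from a to b (including a and b), and let B be the set of points of P on the other closed side (including a and b). Then for every flip of the sequence, removing an edge e and adding an edge f, either both endpoints of e and both endpoints of f lie in A, or both endpoints of e and both endpoints of f lie in B. -/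
open scoped Classical

lemma helper4 (P : Finset Point) (hP : ConvexPos P) (q c d : Point)
    (hq : q ∈ convexHull ℝ (P : Set Point)) (hc : c ∈ P) (hd : d ∈ P) (hdc : d ≠ c)
    (t : ℝ) (ht0 : 0 ≤ t) (ht1 : t < 1) (heq : c = (1 - t) • d + t • q) : False := by
  set X : Set Point := (P : Set Point) \ {c} with hX
  have hdX : d ∈ X := ⟨hd, hdc⟩
  have hsub : (P : Set Point) ⊆ insert c X := by
    intro p hp
    by_cases hpc : p = c
    · exact hpc ▸ Set.mem_insert _ _
    · exact Set.mem_insert_of_mem _ ⟨hp, hpc⟩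
  have hq' : q ∈ convexHull ℝ (insert c X) := convexHull_mono hsub hq
  rw [convexHull_insert ⟨d, hdX⟩] at hq'
  rw [mem_convexJoin] at hq'
  obtain ⟨c', hc', z, hz, hqseg⟩ := hq'
  rw [Set.mem_singleton_iff] at hc'
  rw [hc'] at hqseg
  clear hc'
  rw [segment] at hqseg
  obtain ⟨c₁, c₂, hc₁, hc₂, hsum, hcomb⟩ := hqseg
  set D : ℝ := (1 - t) + t * c₂ with hD
  have hDpos : 0 < D := by nlinarith
  have hz' : z ∈ convexHull ℝ X := hz
  have hd' : d ∈ convexHull ℝ X := subset_convexHull ℝ X hdX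
  have hmem : ((1 - t) / D) • d + ((t * c₂) / D) • z ∈ convexHull ℝ X := by
    apply (convex_convexHull ℝ X) hd' hz'
    · exact div_nonneg (by linarith) hDpos.le
    · exact div_nonneg (by nlinarith) hDpos.le
    · field_simp
      exact hD.symm
  have hceq : c = ((1 - t) / D) • d + ((t * c₂) / D) • z := by
    have h1 : c.1 = (1 - t) * d.1 + t * q.1 := by
      rw [heq]; simp [Prod.fst_add, Prod.smul_fst, smul_eq_mul]
    have h2 : c.2 = (1 - t) * d.2 + t * q.2 := by
      rw [heq]; simp [Prod.snd_add, Prod.smul_snd, smul_eq_mul]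
    have h3 : q.1 = c₁ * c.1 + c₂ * z.1 := by
      rw [← hcomb]; simp [Prod.fst_add, Prod.smul_fst, smul_eq_mul]
    have h4 : q.2 = c₁ * c.2 + c₂ * z.2 := by
      rw [← hcomb]; simp [Prod.snd_add, Prod.smul_snd, smul_eq_mul]
    have hDne : D ≠ 0 := ne_of_gt hDpos
    apply Prod.ext
    · simp only [Prod.fst_add, Prod.smul_fst, smul_eq_mul]
      rw [div_mul_eq_mul_div, div_mul_eq_mul_div, ← add_div, eq_div_iff hDne, hD]
      linear_combination h1 + t*h3 + (t*c.1)*hsum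
    · simp only [Prod.snd_add, Prod.smul_snd, smul_eq_mul]
      rw [div_mul_eq_mul_div, div_mul_eq_mul_div, ← add_div, eq_div_iff hDne, hD]
      linear_combination h2 + t*h4 + (t*c.2)*hsum
  rw [← hceq] at hmem
  rw [hX] at hmem
  exact hP c hc hmem

lemma cross_zero_seg (P : Finset Point) (hP : ConvexPos P) (a b : Point)
    (ha : a ∈ P) (hb : b ∈ P) (hab : a ≠ b) (q : Point)
    (hq : q ∈ convexHull ℝ (P : Set Point)) (h0 : crossProd a b q = 0) :
    q ∈ segment ℝ a b := by
  have hex : ∃ s : ℝ, q.1 = a.1 + s * (b.1 - a.1) ∧ q.2 = a.2 + s * (b.2 - a.2) := by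
    by_cases h1 : b.1 = a.1
    · have h2 : b.2 ≠ a.2 := by
        intro h2; exact hab (Prod.ext h1 h2).symm
      refine ⟨(q.2 - a.2) / (b.2 - a.2), ?_, ?_⟩
      · have : q.1 = a.1 := by
          simp only [crossProd, h1] at h0
          have : (b.2 - a.2) * (q.1 - a.1) = 0 := by linarith
          rcases mul_eq_zero.mp this with h | h
          · exact absurd (by linarith) h2
          · linarith
        rw [this, h1]; ring
      · have hne : b.2 - a.2 ≠ 0 := sub_ne_zero.mpr h2
        field_simp
        ring
    · refine ⟨(q.1 - a.1) / (b.1 - a.1), ?_, ?_⟩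
      · have hne : b.1 - a.1 ≠ 0 := fun h => h1 (by linarith)
        field_simp
        ring
      · have hne : b.1 - a.1 ≠ 0 := fun h => h1 (by linarith)
        simp only [crossProd] at h0
        field_simp
        linear_combination h0
  obtain ⟨s, hs1, hs2⟩ := hex
  rcases le_or_gt s 0 with hsle | hsgt
  · rcases eq_or_lt_of_le hsle with hseq | hslt
    · -- s = 0 : q = a
      have : q = a := Prod.ext (by rw [hs1, hseq]; ring) (by rw [hs2, hseq]; ring)
      rw [this]; exact left_mem_segment ℝ a b
    · -- s < 0 : a strictly between q and b : contradiction
      exfalso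
      have h1s : (0:ℝ) < 1 - s := by linarith
      apply helper4 P hP q a b hq ha hb hab.symm (1/(1-s)) (by positivity)
        (by rw [div_lt_one h1s]; linarith)
      have hne : (1:ℝ) - s ≠ 0 := ne_of_gt h1s
      apply Prod.ext
      · simp only [Prod.fst_add, Prod.smul_fst, smul_eq_mul]
        field_simp
        linear_combination -hs1
      · simp only [Prod.snd_add, Prod.smul_snd, smul_eq_mul]
        field_simp
        linear_combination -hs2
  · rcases le_or_gt s 1 with hsle1 | hsgt1
    · -- 0 < s ≤ 1 : in segment
      rw [segment]
      refine ⟨1 - s, s, by linarith, by linarith, by ring, ?_⟩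
      apply Prod.ext
      · simp only [Prod.fst_add, Prod.smul_fst, smul_eq_mul]; linarith [hs1]
      · simp only [Prod.snd_add, Prod.smul_snd, smul_eq_mul]; linarith [hs2]
    · -- s > 1 : b strictly between a and q
      exfalso
      have hspos : (0:ℝ) < s := by linarith
      apply helper4 P hP q b a hq hb ha hab (1/s) (by positivity)
        (by rw [div_lt_one hspos]; linarith)
      have hne : s ≠ 0 := ne_of_gt hspos
      apply Prod.ext
      · simp only [Prod.fst_add, Prod.smul_fst, smul_eq_mul]
        field_simp
        linear_combination -hs1
      · simp only [Prod.snd_add, Prod.smul_snd, smul_eq_mul]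
        field_simp
        linear_combination -hs2

lemma cross_zero_mem (P : Finset Point) (hP : ConvexPos P) (a b : Point)
    (ha : a ∈ P) (hb : b ∈ P) (hab : a ≠ b) (p : Point)
    (hp : p ∈ P) (h0 : crossProd a b p = 0) : p = a ∨ p = b := by
  by_contra hcon
  push_neg at hcon
  obtain ⟨hpa, hpb⟩ := hcon
  have hseg : p ∈ segment ℝ a b :=
    cross_zero_seg P hP a b ha hb hab p (subset_convexHull ℝ _ hp) h0
  apply hP p hp
  have : segment ℝ a b ⊆ convexHull ℝ ((P : Set Point) \ {p}) := by
    rw [← convexHull_pair]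
    apply convexHull_mono
    intro x hx
    rcases hx with h | h
    · refine ⟨by rw [h]; exact ha, ?_⟩
      rw [h]; exact fun hh => hpa (Set.mem_singleton_iff.mp hh).symm
    · simp only [Set.mem_singleton_iff] at h
      refine ⟨by rw [h]; exact hb, ?_⟩
      rw [h]; exact fun hh => hpb (Set.mem_singleton_iff.mp hh).symm
  exact this hseg

lemma first_step {α : Type*} {R : α → α → Prop} {u v : α}
    (h : Relation.ReflTransGen R u v) (hne : u ≠ v) : ∃ w, w ≠ u ∧ R u w := by
  induction h using Relation.ReflTransGen.head_induction_on with
  | refl => exact absurd rfl hne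
  | head hstep _ ih =>
    rename_i x y _
    by_cases hxy : y = x
    · subst hxy
      exact ih hne
    · exact ⟨y, hxy, hstep⟩

lemma card_le_of_conn_aux (n : ℕ) : ∀ E : Finset Edge, E.card ≤ n →
    ∀ V : Finset Point,
      (∀ u ∈ V, ∀ v ∈ V, Relation.ReflTransGen (fun x y => s(x, y) ∈ E) u v) →
      V.card ≤ E.card + 1 := by
  induction n with
  | zero =>
    intro E hE V hconn
    have hE0 : E = ∅ := Finset.card_eq_zero.mp (Nat.le_zero.mp hE)
    subst hE0
    have : V.card ≤ 1 := by
      rw [Finset.card_le_one]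
      intro u hu v hv
      have h := hconn u hu v hv
      induction h with
      | refl => rfl
      | tail _ hstep _ => exact absurd hstep (by simp)
    omega
  | succ n ih =>
    intro E hE V hconn
    by_cases hV : V.card ≤ 1
    · omega
    · rw [not_le] at hV
      obtain ⟨u, hu, v, hv, huv⟩ := Finset.one_lt_card.mp hV
      obtain ⟨w, hwu, hR⟩ := first_step (hconn u hu v hv) huv
      set σ : Point → Point := fun p => if p = u then w else p with hσ
      set E' : Finset Edge := (E.erase s(u, w)).image (Sym2.map σ) with hE'
      set V' : Finset Point := V.erase u with hV'
      have hgE : s(u, w) ∈ E := hR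
      have hcard' : E'.card ≤ n := by
        have h1 : E'.card ≤ (E.erase s(u, w)).card := Finset.card_image_le
        have h2 : (E.erase s(u, w)).card = E.card - 1 := Finset.card_erase_of_mem hgE
        have h3 : 1 ≤ E.card := Finset.card_pos.mpr ⟨_, hgE⟩
        omega
      have hstepmap : ∀ x y : Point, s(x, y) ∈ E →
          Relation.ReflTransGen (fun x y => s(x, y) ∈ E') (σ x) (σ y) := by
        intro x y hxy
        by_cases hg : s(x, y) = s(u, w)
        · have hss : σ x = σ y := by
            rcases Sym2.eq_iff.mp hg with ⟨hx, hy⟩ | ⟨hx, hy⟩ <;>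
              simp [hσ, hx, hy, hwu]
          rw [hss]
        · apply Relation.ReflTransGen.single
          show s(σ x, σ y) ∈ E'
          rw [← Sym2.map_pair_eq]
          exact Finset.mem_image_of_mem _ (Finset.mem_erase.mpr ⟨hg, hxy⟩)
      have hconn' : ∀ p ∈ V', ∀ q ∈ V',
          Relation.ReflTransGen (fun x y => s(x, y) ∈ E') p q := by
        have hmap : ∀ p q : Point, Relation.ReflTransGen (fun x y => s(x, y) ∈ E) p q →
            Relation.ReflTransGen (fun x y => s(x, y) ∈ E') (σ p) (σ q) := by
          intro p q h
          induction h with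
          | refl => exact Relation.ReflTransGen.refl
          | tail _ hstep ihh => exact ihh.trans (hstepmap _ _ hstep)
        intro p hp q hq
        have hmain := hmap p q (hconn p (Finset.mem_of_mem_erase hp) q (Finset.mem_of_mem_erase hq))
        have hps : σ p = p := by simp [hσ, Finset.ne_of_mem_erase hp]
        have hqs : σ q = q := by simp [hσ, Finset.ne_of_mem_erase hq]
        rwa [hps, hqs] at hmain
      have hV'card : V'.card = V.card - 1 := Finset.card_erase_of_mem hu
      have := ih E' hcard' V' hconn'
      have h2 : (E.erase s(u, w)).card = E.card - 1 := Finset.card_erase_of_mem hgE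
      have h1 : E'.card ≤ (E.erase s(u, w)).card := Finset.card_image_le
      have h3 : 1 ≤ E.card := Finset.card_pos.mpr ⟨_, hgE⟩
      omega

lemma card_le_of_conn (E : Finset Edge) (V : Finset Point)
    (hconn : ∀ u ∈ V, ∀ v ∈ V, Relation.ReflTransGen (fun x y => s(x, y) ∈ E) u v) :
    V.card ≤ E.card + 1 :=
  card_le_of_conn_aux E.card E le_rfl V hconn

lemma crossProd_anti (a b p : Point) : crossProd b a p = -crossProd a b p := by
  simp only [crossProd]; ring

lemma crossProd_self_left (a b : Point) : crossProd a b a = 0 := by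
  simp only [crossProd]; ring

lemma crossProd_self_right (a b : Point) : crossProd a b b = 0 := by
  simp only [crossProd]; ring

lemma crossProd_affine (a b u v : Point) (c d : ℝ) (h : c + d = 1) :
    crossProd a b (c • u + d • v) = c * crossProd a b u + d * crossProd a b v := by
  have hd : d = 1 - c := by linarith
  subst hd
  simp only [crossProd, Prod.fst_add, Prod.snd_add, Prod.smul_fst, Prod.smul_snd, smul_eq_mul]
  ring

lemma edge_side (P : Finset Point) (hP : ConvexPos P) (a b : Point)
    (ha : a ∈ P) (hb : b ∈ P) (hab : a ≠ b) (T : Finset Edge)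
    (hT : IsPST P T) (hsT : s(a, b) ∈ T) :
    ∀ g ∈ T, (∀ p ∈ g, 0 ≤ crossProd a b p) ∨ (∀ p ∈ g, crossProd a b p ≤ 0) := by
  intro g hg
  revert hg
  induction g using Sym2.ind with
  | _ u v =>
    intro hg
    by_contra hcon
    push_neg at hcon
    obtain ⟨⟨p₁, hp₁, h₁⟩, ⟨p₂, hp₂, h₂⟩⟩ := hcon
    -- find x, y with s(x,y) = s(u,v), crossProd a b x < 0 < crossProd a b y
    have key : ∀ x y : Point, s(x, y) ∈ T → crossProd a b x < 0 →
        0 < crossProd a b y → False := by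
      intro x y hxyT hx hy
      have hxP : x ∈ P := hT.endpoints_mem _ hxyT x (Sym2.mem_mk_left x y)
      have hyP : y ∈ P := hT.endpoints_mem _ hxyT y (Sym2.mem_mk_right x y)
      set c : ℝ := crossProd a b y / (crossProd a b y - crossProd a b x) with hc
      set d : ℝ := -crossProd a b x / (crossProd a b y - crossProd a b x) with hd
      have hden : (0:ℝ) < crossProd a b y - crossProd a b x := by linarith
      have hc0 : 0 ≤ c := div_nonneg hy.le hden.le
      have hd0 : 0 ≤ d := div_nonneg (by linarith) hden.le
      have hsum : c + d = 1 := by rw [hc, hd]; field_simp; ring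
      set q : Point := c • x + d • y with hq
      have hq0 : crossProd a b q = 0 := by
        rw [hq, crossProd_affine a b x y c d hsum, hc, hd]
        field_simp
        ring
      have hqseg : q ∈ segment ℝ x y := by
        rw [segment]; exact ⟨c, d, hc0, hd0, hsum, rfl⟩
      have hqhull : q ∈ convexHull ℝ (P : Set Point) :=
        segment_subset_convexHull hxP hyP hqseg
      have hqab : q ∈ segment ℝ a b := cross_zero_seg P hP a b ha hb hab q hqhull hq0
      have hcross : Crosses s(x, y) s(a, b) := by
        refine ⟨?_, q, ?_, ?_, ?_⟩
        · intro heq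
          rcases Sym2.eq_iff.mp heq with ⟨h3, _⟩ | ⟨h3, _⟩
          · rw [h3, crossProd_self_left] at hx; exact lt_irrefl _ hx
          · rw [h3, crossProd_self_right] at hx; exact lt_irrefl _ hx
        · show q ∈ seg s(x, y); rw [seg, Sym2.lift_mk]; exact hqseg
        · show q ∈ seg s(a, b); rw [seg, Sym2.lift_mk]; exact hqab
        · rintro ⟨hq1, -⟩
          rcases Sym2.mem_iff.mp hq1 with h3 | h3
          · rw [h3] at hq0; linarith
          · rw [h3] at hq0; linarith
      exact hT.noncrossing _ hxyT _ hsT hcross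
    rcases Sym2.mem_iff.mp hp₁ with e1 | e1 <;> rcases Sym2.mem_iff.mp hp₂ with e2 | e2
    · rw [e1] at h₁; rw [e2] at h₂; linarith
    · exact key u v hg (e1 ▸ h₁) (e2 ▸ h₂)
    · exact key v u (Sym2.eq_swap ▸ hg) (e1 ▸ h₁) (e2 ▸ h₂)
    · rw [e1] at h₁; rw [e2] at h₂; linarith

lemma both_eq (P : Finset Point) (hP : ConvexPos P) (a b : Point)
    (ha : a ∈ P) (hb : b ∈ P) (hab : a ≠ b) (T : Finset Edge)
    (hT : IsPST P T) (g : Edge) (hg : g ∈ T)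
    (h1 : ∀ p ∈ g, 0 ≤ crossProd a b p) (h2 : ∀ p ∈ g, crossProd a b p ≤ 0) :
    g = s(a, b) := by
  revert hg h1 h2
  induction g using Sym2.ind with
  | _ u v =>
    intro hg h1 h2
    have hu0 : crossProd a b u = 0 :=
      le_antisymm (h2 u (Sym2.mem_mk_left u v)) (h1 u (Sym2.mem_mk_left u v))
    have hv0 : crossProd a b v = 0 :=
      le_antisymm (h2 v (Sym2.mem_mk_right u v)) (h1 v (Sym2.mem_mk_right u v))
    have huP : u ∈ P := hT.endpoints_mem _ hg u (Sym2.mem_mk_left u v)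
    have hvP : v ∈ P := hT.endpoints_mem _ hg v (Sym2.mem_mk_right u v)
    have huv : u ≠ v := by
      intro h; exact hT.not_loop _ hg (Sym2.mk_isDiag_iff.mpr h)
    have Hu := cross_zero_mem P hP a b ha hb hab u huP hu0
    have Hv := cross_zero_mem P hP a b ha hb hab v hvP hv0
    rcases Hu with rfl | rfl <;> rcases Hv with rfl | rfl
    · exact absurd rfl huv
    · rfl
    · exact Sym2.eq_swap
    · exact absurd rfl huv

lemma side_conn (P : Finset Point) (hP : ConvexPos P) (a b : Point)
    (ha : a ∈ P) (hb : b ∈ P) (hab : a ≠ b) (T : Finset Edge)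
    (hT : IsPST P T) (hsT : s(a, b) ∈ T) :
    ∀ u ∈ P.filter (fun q => 0 ≤ crossProd a b q),
      ∀ v ∈ P.filter (fun q => 0 ≤ crossProd a b q),
        Relation.ReflTransGen
          (fun x y => s(x, y) ∈ T.filter (fun g => ∀ p ∈ g, 0 ≤ crossProd a b p)) u v := by
  set EA := T.filter (fun g => ∀ p ∈ g, 0 ≤ crossProd a b p) with hEA
  have habEA : s(a, b) ∈ EA := by
    rw [hEA, Finset.mem_filter]
    refine ⟨hsT, fun p hp => ?_⟩
    rcases Sym2.mem_iff.mp hp with rfl | rfl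
    · rw [crossProd_self_left]
    · rw [crossProd_self_right]
  have hABstep : ∀ x y : Point, (x = a ∨ x = b) → (y = a ∨ y = b) →
      Relation.ReflTransGen (fun x y => s(x, y) ∈ EA) x y := by
    rintro x y (rfl | rfl) (rfl | rfl)
    · exact Relation.ReflTransGen.refl
    · exact Relation.ReflTransGen.single habEA
    · exact Relation.ReflTransGen.single (Sym2.eq_swap ▸ habEA)
    · exact Relation.ReflTransGen.refl
  set π : Point → Point := fun p => if 0 ≤ crossProd a b p then p else a with hπ
  have hπab : ∀ p ∈ P, crossProd a b p ≤ 0 → (π p = a ∨ π p = b) := by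
    intro p hp hneg
    by_cases h0 : 0 ≤ crossProd a b p
    · have : crossProd a b p = 0 := le_antisymm hneg h0
      have hmem := cross_zero_mem P hP a b ha hb hab p hp this
      rw [hπ]; simp only [if_pos h0]; exact hmem
    · exact Or.inl (if_neg h0)
  have hstep : ∀ x y : Point, s(x, y) ∈ T →
      Relation.ReflTransGen (fun x y => s(x, y) ∈ EA) (π x) (π y) := by
    intro x y hxy
    rcases edge_side P hP a b ha hb hab T hT hsT _ hxy with hA | hB
    · have hx := hA x (Sym2.mem_mk_left x y)
      have hy := hA y (Sym2.mem_mk_right x y)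
      have hπx : π x = x := if_pos hx
      have hπy : π y = y := if_pos hy
      rw [hπx, hπy]
      exact Relation.ReflTransGen.single (Finset.mem_filter.mpr ⟨hxy, hA⟩)
    · have hxP : x ∈ P := hT.endpoints_mem _ hxy x (Sym2.mem_mk_left x y)
      have hyP : y ∈ P := hT.endpoints_mem _ hxy y (Sym2.mem_mk_right x y)
      exact hABstep _ _ (hπab x hxP (hB x (Sym2.mem_mk_left x y)))
        (hπab y hyP (hB y (Sym2.mem_mk_right x y)))
  have hmap : ∀ p q : Point, Relation.ReflTransGen (fun x y => s(x, y) ∈ T) p q →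
      Relation.ReflTransGen (fun x y => s(x, y) ∈ EA) (π p) (π q) := by
    intro p q h
    induction h with
    | refl => exact Relation.ReflTransGen.refl
    | tail _ hstep' ihh => exact ihh.trans (hstep _ _ hstep')
  intro u hu v hv
  rw [Finset.mem_filter] at hu hv
  have := hmap u v (hT.connected u hu.1 v hv.1)
  have hπu : π u = u := if_pos hu.2
  have hπv : π v = v := if_pos hv.2
  rwa [hπu, hπv] at this

lemma tree_count (P : Finset Point) (hP : ConvexPos P) (a b : Point)
    (ha : a ∈ P) (hb : b ∈ P) (hab : a ≠ b) (T : Finset Edge)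
    (hT : IsPST P T) (hsT : s(a, b) ∈ T) :
    (T.filter fun g => ∀ p ∈ g, 0 ≤ crossProd a b p).card + 1
      = (P.filter fun q => 0 ≤ crossProd a b q).card := by
  set EA := T.filter (fun g => ∀ p ∈ g, 0 ≤ crossProd a b p) with hEA
  set EB := T.filter (fun g => ∀ p ∈ g, crossProd a b p ≤ 0) with hEB
  set A := P.filter (fun q => 0 ≤ crossProd a b q) with hA
  set B := P.filter (fun q => crossProd a b q ≤ 0) with hB
  have hunionE : EA ∪ EB = T := by
    ext g
    simp only [hEA, hEB, Finset.mem_union, Finset.mem_filter]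
    constructor
    · rintro (⟨h, -⟩ | ⟨h, -⟩) <;> exact h
    · intro h
      rcases edge_side P hP a b ha hb hab T hT hsT g h with h' | h'
      · exact Or.inl ⟨h, h'⟩
      · exact Or.inr ⟨h, h'⟩
  have hinterE : EA ∩ EB = {s(a, b)} := by
    ext g
    simp only [hEA, hEB, Finset.mem_inter, Finset.mem_filter, Finset.mem_singleton]
    constructor
    · rintro ⟨⟨hg, h1⟩, ⟨-, h2⟩⟩
      exact both_eq P hP a b ha hb hab T hT g hg h1 h2
    · rintro rfl
      have hmem : ∀ p ∈ s(a, b), crossProd a b p = 0 := by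
        intro p hp
        rcases Sym2.mem_iff.mp hp with rfl | rfl
        · exact crossProd_self_left _ _
        · exact crossProd_self_right _ _
      exact ⟨⟨hsT, fun p hp => (hmem p hp).ge⟩, ⟨hsT, fun p hp => (hmem p hp).le⟩⟩
  have hcardE : EA.card + EB.card = T.card + 1 := by
    have := Finset.card_union_add_card_inter EA EB
    rw [hunionE, hinterE] at this
    simpa using this.symm
  have hunionV : A ∪ B = P := by
    ext p
    simp only [hA, hB, Finset.mem_union, Finset.mem_filter]
    constructor
    · rintro (⟨h, -⟩ | ⟨h, -⟩) <;> exact h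
    · intro h
      rcases le_total 0 (crossProd a b p) with h' | h'
      · exact Or.inl ⟨h, h'⟩
      · exact Or.inr ⟨h, h'⟩
  have hinterV : A ∩ B = {a, b} := by
    ext p
    simp only [hA, hB, Finset.mem_inter, Finset.mem_filter, Finset.mem_insert,
      Finset.mem_singleton]
    constructor
    · rintro ⟨⟨hp, h1⟩, ⟨-, h2⟩⟩
      exact cross_zero_mem P hP a b ha hb hab p hp (le_antisymm h2 h1)
    · rintro (rfl | rfl)
      · exact ⟨⟨ha, (crossProd_self_left _ _).ge⟩, ⟨ha, (crossProd_self_left _ _).le⟩⟩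
      · exact ⟨⟨hb, (crossProd_self_right _ _).ge⟩, ⟨hb, (crossProd_self_right _ _).le⟩⟩
  have hcardV : A.card + B.card = P.card + 2 := by
    have := Finset.card_union_add_card_inter A B
    rw [hunionV, hinterV] at this
    have h2 : ({a, b} : Finset Point).card = 2 := by
      rw [Finset.card_insert_of_notMem (by simpa using hab), Finset.card_singleton]
    omega
  have hAle : A.card ≤ EA.card + 1 :=
    card_le_of_conn EA A (side_conn P hP a b ha hb hab T hT hsT)
  have hBle : B.card ≤ EB.card + 1 := by
    have hEBeq : EB = T.filter (fun g => ∀ p ∈ g, 0 ≤ crossProd b a p) := by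
      rw [hEB]
      apply Finset.filter_congr
      intro g hg
      constructor
      · intro h p hp
        rw [crossProd_anti]
        linarith [h p hp]
      · intro h p hp
        have := h p hp
        rw [crossProd_anti] at this
        linarith
    have hBeq : B = P.filter (fun q => 0 ≤ crossProd b a q) := by
      rw [hB]
      apply Finset.filter_congr
      intro q hq
      constructor
      · intro h
        rw [crossProd_anti]
        linarith
      · intro h
        rw [crossProd_anti] at h
        linarith
    rw [hEBeq, hBeq]
    exact card_le_of_conn _ _
      (side_conn P hP b a hb ha hab.symm T hT (Sym2.eq_swap ▸ hsT))
  have hTcard := hT.card_eq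
  omega

lemma flip_side_aux (P : Finset Point) (hP : ConvexPos P) (a b : Point)
    (ha : a ∈ P) (hb : b ∈ P) (hab : a ≠ b) (T T' : Finset Edge)
    (hT : IsPST P T) (hT' : IsPST P T') (hsT : s(a, b) ∈ T) (hsT' : s(a, b) ∈ T')
    (e f : Edge) (he : e ∈ T) (hf : f ∈ T') (hfT : f ∉ T)
    (hTT' : T' = insert f (T.erase e))
    (heA : ∀ p ∈ e, 0 ≤ crossProd a b p)
    (hfB : ¬∀ p ∈ f, 0 ≤ crossProd a b p) : False := by
  set EA := T.filter (fun g => ∀ p ∈ g, 0 ≤ crossProd a b p) with hEA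
  set EA' := T'.filter (fun g => ∀ p ∈ g, 0 ≤ crossProd a b p) with hEA'
  have heEA : e ∈ EA := Finset.mem_filter.mpr ⟨he, heA⟩
  have hEA'eq : EA' = EA.erase e := by
    ext g
    simp only [hEA', hEA, Finset.mem_filter, Finset.mem_erase, hTT', Finset.mem_insert]
    constructor
    · rintro ⟨hg | ⟨hge, hgT⟩, hgA⟩
      · exact absurd (hg ▸ hgA) hfB
      · exact ⟨hge, hgT, hgA⟩
    · rintro ⟨hge, hgT, hgA⟩
      exact ⟨Or.inr ⟨hge, hgT⟩, hgA⟩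
  have h1 := tree_count P hP a b ha hb hab T hT hsT
  have h2 := tree_count P hP a b ha hb hab T' hT' hsT'
  rw [← hEA] at h1
  rw [← hEA', hEA'eq] at h2
  have h3 : (EA.erase e).card = EA.card - 1 := Finset.card_erase_of_mem heEA
  have h4 : 1 ≤ EA.card := Finset.card_pos.mpr ⟨e, heEA⟩
  omega


/-- If an edge `ab` belongs to every tree of a flip sequence, then every flip
happens entirely on one of the two closed sides of the line through `a` and
`b`: either all endpoints of the removed and of the added edge lie in
`A = {p ∈ P | 0 ≤ crossProd a b p}`, or they all lie in
`B = {p ∈ P | crossProd a b p ≤ 0}`. -/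
theorem stmt_17 (P : Finset Point) (hP : ConvexPos P) (k : ℕ)
    (S : ℕ → Finset Edge) (hS : IsFlipSeq P k S) (a b : Point)
    (ha : a ∈ P) (hb : b ∈ P) (hab : a ≠ b)
    (hs : ∀ i ≤ k, s(a, b) ∈ S i) :
    ∀ i < k, ∀ e f : Edge,
      e ∈ S i → e ∉ S (i + 1) → f ∈ S (i + 1) → f ∉ S i →
        (((∀ p ∈ e, p ∈ P.filter fun q => 0 ≤ crossProd a b q) ∧
          (∀ p ∈ f, p ∈ P.filter fun q => 0 ≤ crossProd a b q)) ∨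
         ((∀ p ∈ e, p ∈ P.filter fun q => crossProd a b q ≤ 0) ∧
          (∀ p ∈ f, p ∈ P.filter fun q => crossProd a b q ≤ 0))) := by
  intro i hik e f he heT' hf hfT
  have hT : IsPST P (S i) := hS.1 i hik.le
  have hT' : IsPST P (S (i + 1)) := hS.1 (i + 1) hik
  have hsT : s(a, b) ∈ S i := hs i hik.le
  have hsT' : s(a, b) ∈ S (i + 1) := hs (i + 1) hik
  obtain ⟨e', f', ⟨-, -, he', hf', hTT'⟩⟩ := hS.2 i hik
  have hfe' : f = f' := by
    have hmem : f ∈ insert f' ((S i).erase e') := hTT' ▸ hf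
    rcases Finset.mem_insert.mp hmem with h | h
    · exact h
    · exact absurd (Finset.mem_of_mem_erase h) hfT
  have hee' : e = e' := by
    have hmem : e ∉ insert f' ((S i).erase e') := hTT' ▸ heT'
    by_contra hne
    exact hmem (Finset.mem_insert_of_mem (Finset.mem_erase.mpr ⟨hne, he⟩))
  rw [← hfe', ← hee'] at hTT'
  have hesab : e ≠ s(a, b) := fun h => heT' (h ▸ hsT')
  have hfsab : f ≠ s(a, b) := fun h => hfT (h ▸ hsT)
  rcases edge_side P hP a b ha hb hab _ hT hsT e he with heA | heB <;>
    rcases edge_side P hP a b ha hb hab _ hT' hsT' f hf with hfA | hfB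
  · -- both on A side
    exact Or.inl ⟨fun p hp => Finset.mem_filter.mpr
        ⟨hT.endpoints_mem e he p hp, heA p hp⟩,
      fun p hp => Finset.mem_filter.mpr
        ⟨hT'.endpoints_mem f hf p hp, hfA p hp⟩⟩
  · -- e on A, f on B : contradiction
    exfalso
    have hfB' : ¬∀ p ∈ f, 0 ≤ crossProd a b p := fun hAll =>
      hfsab (both_eq P hP a b ha hb hab _ hT' f hf hAll hfB)
    exact flip_side_aux P hP a b ha hb hab (S i) (S (i + 1)) hT hT' hsT hsT'
      e f he hf hfT hTT' heA hfB'
  · -- e on B, f on A : contradiction (swap orientation)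
    exfalso
    have hfB' : ¬∀ p ∈ f, crossProd a b p ≤ 0 := fun hAll =>
      hfsab (both_eq P hP a b ha hb hab _ hT' f hf hfA hAll)
    have heA2 : ∀ p ∈ e, 0 ≤ crossProd b a p := by
      intro p hp
      rw [crossProd_anti]
      linarith [heB p hp]
    have hfB2 : ¬∀ p ∈ f, 0 ≤ crossProd b a p := by
      intro hAll
      apply hfB'
      intro p hp
      have := hAll p hp
      rw [crossProd_anti] at this
      linarith
    exact flip_side_aux P hP b a hb ha hab.symm (S i) (S (i + 1)) hT hT'
      (Sym2.eq_swap ▸ hsT) (Sym2.eq_swap ▸ hsT') e f he hf hfT hTT' heA2 hfB2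
  · -- both on B side
    exact Or.inr ⟨fun p hp => Finset.mem_filter.mpr
        ⟨hT.endpoints_mem e he p hp, heB p hp⟩,
      fun p hp => Finset.mem_filter.mpr
        ⟨hT'.endpoints_mem f hf p hp, hfB p hp⟩⟩
end
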